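/- arXiv:quant-ph/0512142 — 10 statements merged into one kernel-verified Lean document; each statement's English description precedes it below -/
import Mathlib

section
/- Let E_1,…,E_n be quantum operations on ℂ^d, where E_i has Kraus operators {E_i^k : k = 1,…,n_i}. Then E_1,…,E_n are unambiguously distinguishable by a single use (possibly using an entangled ancilla) if and only if for every i = 1,…,n, supp(E_i) is not contained in the subspace Σ_{j≠i} supp(E_j) of M_d(ℂ). -/
open Matrix Kronecker
open scoped ComplexOrder

noncomputable section

/-- A quantum operation on ℂ^d given by a finite family of Kraus operators
satisfying the completeness condition. -/
structure QuantumOp (d : ℕ) where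
  m : ℕ
  K : Fin m → Matrix (Fin d) (Fin d) ℂ
  complete : ∑ k, (K k)ᴴ * K k = 1

/-- The support of a quantum operation: the span of its Kraus operators. -/
def QuantumOp.supp {d : ℕ} (E : QuantumOp d) : Submodule ℂ (Matrix (Fin d) (Fin d) ℂ) :=
  Submodule.span ℂ (Set.range E.K)

/-- The output state (E ⊗ I)(|ψ⟩⟨ψ|) = Σ_k (E^k ⊗ I)|ψ⟩⟨ψ|(E^k ⊗ I)†. -/
def QuantumOp.output {d : ℕ} (E : QuantumOp d) (da : ℕ) (ψ : Fin d × Fin da → ℂ) :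
    Matrix (Fin d × Fin da) (Fin d × Fin da) ℂ :=
  ∑ k, (E.K k ⊗ₖ (1 : Matrix (Fin da) (Fin da) ℂ)) * vecMulVec ψ (star ψ) *
    (E.K k ⊗ₖ (1 : Matrix (Fin da) (Fin da) ℂ))ᴴ

/-- States σ_1, …, σ_n are unambiguously distinguishable if there is a POVM
{Π_0, Π_1, …, Π_n} with tr(Π_i σ_j) = 0 for i ≠ j and tr(Π_i σ_i) > 0. -/
def UnambiguouslyDistinguishable {μ : Type*} [Fintype μ] [DecidableEq μ] {n : ℕ}
    (σ : Fin n → Matrix μ μ ℂ) : Prop :=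
  ∃ P0 : Matrix μ μ ℂ, ∃ P : Fin n → Matrix μ μ ℂ,
    P0.PosSemidef ∧ (∀ i, (P i).PosSemidef) ∧
    (P0 + ∑ i, P i = 1) ∧
    (∀ i j, i ≠ j → (P i * σ j).trace = 0) ∧
    (∀ i, 0 < (P i * σ i).trace)

/-- The operations E_1, …, E_n are unambiguously distinguishable by a single use:
there are an ancilla dimension d_a ≥ 1 and a unit vector ψ ∈ ℂ^d ⊗ ℂ^{d_a} whose
output states are unambiguously distinguishable. -/
def UnambigSingleUse {d n : ℕ} (E : Fin n → QuantumOp d) : Prop :=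
  ∃ da : ℕ, 0 < da ∧ ∃ ψ : Fin d × Fin da → ℂ,
    star ψ ⬝ᵥ ψ = 1 ∧
    UnambiguouslyDistinguishable (fun i => (E i).output da ψ)

/-!
Write the output state as `ρᵢ = ∑ₖ vₖ vₖᴴ` with `vₖ = (Eᵢᵏ ⊗ I) ψ`. A positive semidefinite `P`
has `tr (P ρᵢ) = 0` exactly when `P` kills `(A ⊗ I) ψ` for every `A ∈ supp Eᵢ`, and this condition
is linear in `A`. So if `supp Eᵢ ⊆ ∑_{j ≠ i} supp Eⱼ`, every `Πᵢ` that vanishes on the other outputs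
vanishes on `ρᵢ` as well.

Conversely, for the maximally entangled `ψ` the map `A ↦ (A ⊗ I) ψ` is injective, so for each `i`
some functional `A ↦ ⟨uᵢ, (A ⊗ I) ψ⟩` vanishes on `∑_{j ≠ i} supp Eⱼ` but not on `supp Eᵢ`. The
rank-one operators `uᵢ uᵢᴴ`, scaled down by a common factor so that their sum stays below `I`
(Cauchy–Schwarz), complete to the required POVM.
-/

namespace Matrix

variable {μ : Type*} [Fintype μ]

theorem trace_mul_vecMulVec_self_star (P : Matrix μ μ ℂ) (v : μ → ℂ) :
    (P * vecMulVec v (star v)).trace = star v ⬝ᵥ (P *ᵥ v) := by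
  rw [mul_vecMulVec, trace_vecMulVec, dotProduct_comm]

theorem vecMulVec_self_star_mulVec (u x : μ → ℂ) :
    vecMulVec u (star u) *ᵥ x = (star u ⬝ᵥ x) • u := by
  rw [vecMulVec_mulVec, op_smul_eq_smul]

theorem vecMulVec_self_star_mulVec_eq_zero_iff (u x : μ → ℂ) :
    vecMulVec u (star u) *ᵥ x = 0 ↔ star u ⬝ᵥ x = 0 := by
  rw [vecMulVec_self_star_mulVec, smul_eq_zero, or_iff_left_iff_imp]
  rintro rfl
  simp

theorem star_dotProduct_vecMulVec_self_star_mulVec (u x : μ → ℂ) :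
    star x ⬝ᵥ (vecMulVec u (star u) *ᵥ x)
      = ((‖inner ℂ (WithLp.toLp 2 u) (WithLp.toLp 2 x)‖ ^ 2 : ℝ) : ℂ) := by
  rw [vecMulVec_self_star_mulVec, dotProduct_smul, smul_eq_mul, Complex.ofReal_pow,
    ← Complex.mul_conj', EuclideanSpace.inner_toLp_toLp, dotProduct_comm x, Complex.star_def.symm, ← star_dotProduct,
    mul_comm]

theorem PosSemidef.trace_mul_sum_vecMulVec_nonneg {κ : Type*} [Fintype κ] {P : Matrix μ μ ℂ}
    (hP : P.PosSemidef) (v : κ → μ → ℂ) :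
    0 ≤ (P * ∑ k, vecMulVec (v k) (star (v k))).trace := by
  simp only [Matrix.mul_sum, trace_sum, trace_mul_vecMulVec_self_star]
  exact Finset.sum_nonneg fun k _ => hP.dotProduct_mulVec_nonneg (v k)

theorem PosSemidef.trace_mul_sum_vecMulVec_eq_zero_iff {κ : Type*} [Fintype κ]
    {P : Matrix μ μ ℂ} (hP : P.PosSemidef) (v : κ → μ → ℂ) :
    (P * ∑ k, vecMulVec (v k) (star (v k))).trace = 0 ↔ ∀ k, P *ᵥ v k = 0 := by
  simp only [Matrix.mul_sum, trace_sum, trace_mul_vecMulVec_self_star,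
    Fintype.sum_eq_zero_iff_of_nonneg fun k => hP.dotProduct_mulVec_nonneg (v k), funext_iff,
    Pi.zero_apply, hP.dotProduct_mulVec_zero_iff]

theorem posSemidef_one_sub_sum_smul_vecMulVec [DecidableEq μ] {ι : Type*} [Fintype ι]
    (u : ι → μ → ℂ) {t : ℝ} (ht : 0 ≤ t) (hu : t * ∑ i, ‖WithLp.toLp 2 (u i)‖ ^ 2 ≤ 1) :
    (1 - ∑ i, (t : ℂ) • vecMulVec (u i) (star (u i))).PosSemidef := by
  have hPi i : ((t : ℂ) • vecMulVec (u i) (star (u i))).PosSemidef :=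
    (posSemidef_vecMulVec_self_star (u i)).smul (Complex.zero_le_real.2 ht)
  refine .of_dotProduct_mulVec_nonneg
    (isHermitian_one.sub (posSemidef_sum _ fun i _ => hPi i).isHermitian) fun x => ?_
  set X := WithLp.toLp 2 x
  have hX : star x ⬝ᵥ x = ((‖X‖ ^ 2 : ℝ) : ℂ) := by
    rw [dotProduct_comm, ← EuclideanSpace.inner_toLp_toLp, inner_self_eq_norm_sq_to_K]
    push_cast
    rfl
  have hCS i : ‖inner ℂ (WithLp.toLp 2 (u i)) X‖ ^ 2 ≤ ‖WithLp.toLp 2 (u i)‖ ^ 2 * ‖X‖ ^ 2 := by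
    rw [← mul_pow]
    exact pow_le_pow_left₀ (norm_nonneg _) (norm_inner_le_norm _ _) 2
  have hsum : ∑ i, t * ‖inner ℂ (WithLp.toLp 2 (u i)) X‖ ^ 2 ≤ ‖X‖ ^ 2 :=
    calc ∑ i, t * ‖inner ℂ (WithLp.toLp 2 (u i)) X‖ ^ 2
        ≤ ∑ i, t * (‖WithLp.toLp 2 (u i)‖ ^ 2 * ‖X‖ ^ 2) :=
          Finset.sum_le_sum fun i _ => mul_le_mul_of_nonneg_left (hCS i) ht
      _ = (t * ∑ i, ‖WithLp.toLp 2 (u i)‖ ^ 2) * ‖X‖ ^ 2 := by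
          rw [Finset.mul_sum, Finset.sum_mul]; simp only [mul_assoc]
      _ ≤ ‖X‖ ^ 2 := mul_le_of_le_one_left (by positivity) hu
  simp only [sub_mulVec, one_mulVec, dotProduct_sub, sum_mulVec, dotProduct_sum, smul_mulVec,
    dotProduct_smul, star_dotProduct_vecMulVec_self_star_mulVec, hX, smul_eq_mul]
  exact_mod_cast sub_nonneg.2 hsum

end Matrix

theorem Submodule.exists_dotProduct_eq_zero_and_ne_zero_of_notMem {K μ : Type*} [Field K]
    [Fintype μ] {S : Submodule K (μ → K)} {v : μ → K} (hv : v ∉ S) :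
    ∃ w : μ → K, (∀ y ∈ S, w ⬝ᵥ y = 0) ∧ w ⬝ᵥ v ≠ 0 := by
  classical
  obtain ⟨f, hfv, hfS⟩ := S.exists_dual_map_eq_bot_of_notMem hv inferInstance
  have hf y : (dotProductEquiv K μ).symm f ⬝ᵥ y = f y := by
    rw [← dotProductEquiv_apply_apply, LinearEquiv.apply_symm_apply]
  exact ⟨(dotProductEquiv K μ).symm f, fun y hy => by
    rw [hf]; exact LinearMap.le_ker_iff_map.2 hfS hy, by rwa [hf]⟩

theorem unambiguouslyDistinguishable_of_vecMulVec {μ : Type*} [Fintype μ] [DecidableEq μ]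
    {n : ℕ} {σ : Fin n → Matrix μ μ ℂ} (u : Fin n → μ → ℂ)
    (h0 : ∀ i j, i ≠ j → (vecMulVec (u i) (star (u i)) * σ j).trace = 0)
    (hpos : ∀ i, 0 < (vecMulVec (u i) (star (u i)) * σ i).trace) :
    UnambiguouslyDistinguishable σ := by
  set s := ∑ i, ‖WithLp.toLp 2 (u i)‖ ^ 2
  have hs : 0 ≤ s := by positivity
  set t := (1 + s)⁻¹
  have ht : 0 < t := by positivity
  have hts : t * s ≤ 1 := by
    rw [inv_mul_le_iff₀ (by positivity)]
    linarith
  refine ⟨1 - ∑ i, (t : ℂ) • vecMulVec (u i) (star (u i)),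
    fun i => (t : ℂ) • vecMulVec (u i) (star (u i)),
    posSemidef_one_sub_sum_smul_vecMulVec u ht.le hts,
    fun i => (posSemidef_vecMulVec_self_star (u i)).smul (Complex.zero_le_real.2 ht.le),
    sub_add_cancel _ _, fun i j hij => ?_, fun i => ?_⟩
  · rw [smul_mul_assoc, trace_smul, h0 i j hij, smul_zero]
  · rw [smul_mul_assoc, trace_smul, smul_eq_mul]
    exact mul_pos (Complex.zero_lt_real.2 ht) (hpos i)

section Kronecker

variable {m a : Type*} [Fintype m] [Fintype a] [DecidableEq a]

theorem kronecker_one_mulVec_uncurry (A : Matrix m m ℂ) (M : Matrix m a ℂ) :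
    (A ⊗ₖ (1 : Matrix a a ℂ)) *ᵥ Function.uncurry M = Function.uncurry (A * M) := by
  ext ⟨i, j⟩
  simp [mulVec, dotProduct, Fintype.sum_prod_type, one_apply, mul_apply, Function.uncurry]

def kroneckerOneMulVec (ψ : m × a → ℂ) : Matrix m m ℂ →ₗ[ℂ] (m × a → ℂ) where
  toFun A := (A ⊗ₖ (1 : Matrix a a ℂ)) *ᵥ ψ
  map_add' A B := by simp only [add_kronecker, add_mulVec]
  map_smul' c A := by simp only [smul_kronecker, smul_mulVec, RingHom.id_apply]

end Kronecker

def maxEntangled (d : ℕ) : Fin d × Fin d → ℂ :=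
  Function.uncurry (((√d : ℝ) : ℂ)⁻¹ • (1 : Matrix (Fin d) (Fin d) ℂ))

theorem star_maxEntangled_dotProduct {d : ℕ} (hd : 0 < d) :
    star (maxEntangled d) ⬝ᵥ maxEntangled d = 1 := by
  have hd' : (d : ℂ) ≠ 0 := Nat.cast_ne_zero.2 hd.ne'
  simp only [dotProduct, maxEntangled, Pi.star_apply, Function.uncurry, Matrix.smul_apply, one_apply,
    smul_eq_mul, mul_ite, mul_one, mul_zero, RCLike.star_def, Fintype.sum_prod_type,
    Finset.sum_ite_eq, Finset.mem_univ, ↓reduceIte, map_inv₀, Complex.conj_ofReal,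
    Finset.sum_const, Finset.card_univ, Fintype.card_fin, nsmul_eq_mul]
  rw [← mul_inv, ← Complex.ofReal_mul, Real.mul_self_sqrt d.cast_nonneg, Complex.ofReal_natCast,
    mul_inv_cancel₀ hd']

theorem kroneckerOneMulVec_maxEntangled_injective {d : ℕ} (hd : 0 < d) :
    Function.Injective (kroneckerOneMulVec (maxEntangled d)) := by
  have hc : ((√d : ℝ) : ℂ)⁻¹ ≠ 0 := by simpa using hd.ne'
  intro A B hAB
  simp only [kroneckerOneMulVec, LinearMap.coe_mk, AddHom.coe_mk, maxEntangled,
    kronecker_one_mulVec_uncurry, mul_smul_comm, mul_one] at hAB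
  exact smul_right_injective _ hc (Function.uncurry_injective hAB)

namespace QuantumOp

variable {d : ℕ} (E : QuantumOp d) {da : ℕ} (ψ : Fin d × Fin da → ℂ)

theorem output_eq_sum_vecMulVec :
    E.output da ψ = ∑ k, vecMulVec (kroneckerOneMulVec ψ (E.K k))
      (star (kroneckerOneMulVec ψ (E.K k))) := by
  simp only [QuantumOp.output, mul_vecMulVec, vecMulVec_mul, ← star_mulVec]
  rfl

theorem trace_mul_output_nonneg {P : Matrix (Fin d × Fin da) (Fin d × Fin da) ℂ}
    (hP : P.PosSemidef) : 0 ≤ (P * E.output da ψ).trace := by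
  rw [output_eq_sum_vecMulVec]
  exact hP.trace_mul_sum_vecMulVec_nonneg _

theorem trace_mul_output_eq_zero_iff {P : Matrix (Fin d × Fin da) (Fin d × Fin da) ℂ}
    (hP : P.PosSemidef) :
    (P * E.output da ψ).trace = 0 ↔
      E.supp ≤ LinearMap.ker (P.mulVecLin ∘ₗ kroneckerOneMulVec ψ) := by
  rw [output_eq_sum_vecMulVec, hP.trace_mul_sum_vecMulVec_eq_zero_iff, QuantumOp.supp,
    Submodule.span_le, Set.range_subset_iff]
  rfl

theorem trace_vecMulVec_mul_output_eq_zero_iff (u : Fin d × Fin da → ℂ) :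
    (vecMulVec u (star u) * E.output da ψ).trace = 0 ↔
      ∀ A ∈ E.supp, star u ⬝ᵥ kroneckerOneMulVec ψ A = 0 := by
  simp only [E.trace_mul_output_eq_zero_iff ψ (posSemidef_vecMulVec_self_star u), SetLike.le_def,
    LinearMap.mem_ker, LinearMap.comp_apply, mulVecLin_apply,
    vecMulVec_self_star_mulVec_eq_zero_iff]

end QuantumOp

theorem UnambigSingleUse.not_supp_le_iSup_supp {d n : ℕ} {E : Fin n → QuantumOp d}
    (h : UnambigSingleUse E) (i : Fin n) : ¬ (E i).supp ≤ ⨆ j ≠ i, (E j).supp := by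
  obtain ⟨da, -, ψ, -, -, P, -, hP, -, h0, hpos⟩ := h
  intro hle
  have hker : ⨆ j ≠ i, (E j).supp ≤ LinearMap.ker ((P i).mulVecLin ∘ₗ kroneckerOneMulVec ψ) :=
    iSup₂_le fun j hj => ((E j).trace_mul_output_eq_zero_iff ψ (hP i)).1 (h0 i j hj.symm)
  exact (hpos i).ne' (((E i).trace_mul_output_eq_zero_iff ψ (hP i)).2 (hle.trans hker))

theorem unambigSingleUse_of_forall_not_supp_le {d n : ℕ} (hd : 0 < d) (E : Fin n → QuantumOp d)
    (h : ∀ i, ¬ (E i).supp ≤ ⨆ j ≠ i, (E j).supp) : UnambigSingleUse E := by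
  set L := kroneckerOneMulVec (maxEntangled d)
  have hsep i : ∃ u : Fin d × Fin d → ℂ, (∀ A ∈ ⨆ j ≠ i, (E j).supp, star u ⬝ᵥ L A = 0) ∧
      ∃ A ∈ (E i).supp, star u ⬝ᵥ L A ≠ 0 := by
    obtain ⟨A, hA, hAW⟩ := SetLike.not_le_iff_exists.1 (h i)
    have hLA : L A ∉ (⨆ j ≠ i, (E j).supp).map L := fun ⟨B, hB, hBA⟩ =>
      hAW (kroneckerOneMulVec_maxEntangled_injective hd hBA ▸ hB)
    obtain ⟨w, hw0, hwA⟩ := Submodule.exists_dotProduct_eq_zero_and_ne_zero_of_notMem hLA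
    refine ⟨star w, fun B hB => ?_, A, hA, ?_⟩ <;> rw [star_star]
    exacts [hw0 _ (Submodule.mem_map_of_mem hB), hwA]
  choose u hu0 huA using hsep
  refine ⟨d, hd, maxEntangled d, star_maxEntangled_dotProduct hd,
    unambiguouslyDistinguishable_of_vecMulVec u (fun i j hij => ?_) (fun i => ?_)⟩
  · refine ((E j).trace_vecMulVec_mul_output_eq_zero_iff _ _).2 fun A hA => hu0 i A ?_
    exact Submodule.mem_iSup_of_mem j (Submodule.mem_iSup_of_mem hij.symm hA)
  · obtain ⟨A, hA, huA⟩ := huA i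
    refine ((E i).trace_mul_output_nonneg _ (posSemidef_vecMulVec_self_star _)).lt_of_ne' ?_
    exact fun h0 => huA (((E i).trace_vecMulVec_mul_output_eq_zero_iff _ _).1 h0 A hA)

/-- E_1, …, E_n are unambiguously distinguishable by a single use iff
for every i, supp(E_i) is not contained in Σ_{j ≠ i} supp(E_j). -/
theorem unambig_single_use_iff {d n : ℕ} (hd : 0 < d) (E : Fin n → QuantumOp d) :
    UnambigSingleUse E ↔
      ∀ i, ¬ ((E i).supp ≤ ⨆ j ≠ i, (E j).supp) :=
  ⟨UnambigSingleUse.not_supp_le_iSup_supp, unambigSingleUse_of_forall_not_supp_le hd E⟩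
end
end

section
/- Let E_1,…,E_n be quantum operations on ℂ^d with Kraus operators {E_i^k}. If for some index i one has supp(E_i) ⊆ Σ_{j≠i} supp(E_j), then for every ancilla dimension d_a and every vector ψ ∈ ℂ^d ⊗ ℂ^{d_a}, the column space of the output matrix (E_i ⊗ I)(|ψ⟩⟨ψ|) = Σ_k (E_i^k ⊗ I)|ψ⟩⟨ψ|(E_i^k ⊗ I)† is contained in the sum over j ≠ i of the column spaces of the matrices (E_j ⊗ I)(|ψ⟩⟨ψ|). -/
open Matrix Kronecker
open scoped ComplexOrder

noncomputable section

/-!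
Writing `L A = (A ⊗ I) ψ`, which is linear in `A`, the output state of `E` is the Gram-type
matrix `∑ₖ |L Eᵏ⟩⟨L Eᵏ|`. Such a matrix `B Bᴴ` has the same column space as `B`, namely the span
of the vectors `L Eᵏ`, so the column space of `(E ⊗ I)(|ψ⟩⟨ψ|)` is the image of `supp E`
under `L`. Taking images under a linear map preserves inclusions and sums of subspaces.
-/

namespace Matrix

section StarOrderedField

variable {m n R : Type*} [Fintype m] [Fintype n] [Field R] [PartialOrder R] [StarRing R]
  [StarOrderedRing R]

theorem range_mulVecLin_self_mul_conjTranspose (A : Matrix m n R) :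
    LinearMap.range (A * Aᴴ).mulVecLin = LinearMap.range A.mulVecLin := by
  have hle : LinearMap.range (A * Aᴴ).mulVecLin ≤ LinearMap.range A.mulVecLin := by
    rw [mulVecLin_mul]
    exact LinearMap.range_comp_le_range _ _
  exact Submodule.eq_of_le_of_finrank_eq hle (rank_self_mul_conjTranspose A)

theorem range_mulVecLin_sum_vecMulVec_star (v : n → m → R) :
    LinearMap.range (∑ k, vecMulVec (v k) (star (v k))).mulVecLin =
      Submodule.span R (Set.range v) := by
  have hv : ∑ k, vecMulVec (v k) (star (v k)) = (of v)ᵀ * (of v)ᵀᴴ := by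
    ext i j
    simp [mul_apply, vecMulVec_apply, Matrix.sum_apply]
  rw [hv, range_mulVecLin_self_mul_conjTranspose, range_mulVecLin]
  rfl

end StarOrderedField

theorem mul_vecMulVec_star_mul_conjTranspose {m n R : Type*} [Fintype n] [CommRing R]
    [StarRing R] (A : Matrix m n R) (ψ : n → R) :
    A * vecMulVec ψ (star ψ) * Aᴴ = vecMulVec (A *ᵥ ψ) (star (A *ᵥ ψ)) := by
  rw [mul_vecMulVec, vecMulVec_mul, star_mulVec]

def kroneckerOneMulVecLin {m α R : Type*} [Fintype m] [Fintype α] [DecidableEq α]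
    [CommSemiring R] (ψ : m × α → R) : Matrix m m R →ₗ[R] (m × α → R) where
  toFun A := (A ⊗ₖ (1 : Matrix α α R)) *ᵥ ψ
  map_add' A B := by rw [add_kronecker, add_mulVec]
  map_smul' c A := by rw [smul_kronecker, smul_mulVec, RingHom.id_apply]

end Matrix

theorem QuantumOp.range_mulVecLin_output {d : ℕ} (E : QuantumOp d) (da : ℕ)
    (ψ : Fin d × Fin da → ℂ) :
    LinearMap.range (E.output da ψ).mulVecLin = E.supp.map (kroneckerOneMulVecLin ψ) := by
  simp only [output, mul_vecMulVec_star_mul_conjTranspose]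
  rw [supp, Submodule.map_span, ← Set.range_comp]
  exact range_mulVecLin_sum_vecMulVec_star _

/-- if supp(E_i) ⊆ Σ_{j≠i} supp(E_j), then for every ancilla dimension and
every input vector ψ, the column space of (E_i ⊗ I)(|ψ⟩⟨ψ|) is contained in the sum of
the column spaces of the (E_j ⊗ I)(|ψ⟩⟨ψ|), j ≠ i. -/
theorem output_range_le_of_supp_le {d n : ℕ} (E : Fin n → QuantumOp d) (i : Fin n)
    (h : (E i).supp ≤ ⨆ j ≠ i, (E j).supp) (da : ℕ) (ψ : Fin d × Fin da → ℂ) :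
    LinearMap.range ((E i).output da ψ).mulVecLin ≤
      ⨆ j ≠ i, LinearMap.range ((E j).output da ψ).mulVecLin := by
  simp only [QuantumOp.range_mulVecLin_output, ← Submodule.map_iSup]
  exact Submodule.map_mono h
end
end

section
/- Let E_1,…,E_n be quantum operations on ℂ^d with Kraus operators {E_i^k} such that for every i, supp(E_i) is not contained in Σ_{j≠i} supp(E_j). Let ψ = Σ_{t=1}^d α_t |t⟩⊗|t⟩ ∈ ℂ^d ⊗ ℂ^d be any unit vector with full Schmidt number, i.e., α_t > 0 for all t, where {|t⟩} is an orthonormal basis of ℂ^d. Then the n output states (E_i ⊗ I)(|ψ⟩⟨ψ|) = Σ_k (E_i^k ⊗ I)|ψ⟩⟨ψ|(E_i^k ⊗ I)†, i = 1,…,n, are unambiguously distinguishable. -/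
open Matrix Kronecker
open scoped ComplexOrder

noncomputable section

/-!
By the support condition there is a linear functional `f i` on matrices that vanishes on the
Kraus operators of every `E j` with `j ≠ i` but not on all of those of `E i`. Since every
Schmidt coefficient is nonzero, each functional has the form `A ↦ ⟨w, (A ⊗ I) ψ⟩`, and then
`tr (|w i⟩⟨w i| σ j) = ∑ k, |f i (E_j^k)|²`. Scaled down so that their sum stays below the
identity, the rank-one operators `|w i⟩⟨w i|` complete to the required measurement.
-/
section

variable {μ : Type*} [Fintype μ] [DecidableEq μ]

open scoped Matrix.Norms.L2Operator MatrixOrder in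
theorem Matrix.PosSemidef.exists_pos_one_sub_smul_posSemidef {Q : Matrix μ μ ℂ}
    (hQ : Q.PosSemidef) : ∃ c : ℝ, 0 < c ∧ (1 - c • Q).PosSemidef := by
  have hle : (algebraMap ℝ (Matrix μ μ ℂ) ‖Q‖ - Q).PosSemidef :=
    IsSelfAdjoint.le_algebraMap_norm_self hQ.isHermitian
  have hpos : 0 < ‖Q‖ + 1 := by positivity
  refine ⟨(‖Q‖ + 1)⁻¹, inv_pos.mpr hpos, ?_⟩
  convert (hle.add PosSemidef.one).smul (inv_pos.mpr hpos).le using 1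
  rw [Algebra.algebraMap_eq_smul_one, sub_add_eq_add_sub]
  match_scalars <;> field_simp

theorem unambiguouslyDistinguishable_of_posSemidef {n : ℕ} {σ : Fin n → Matrix μ μ ℂ}
    (Q : Fin n → Matrix μ μ ℂ) (hQ : ∀ i, (Q i).PosSemidef)
    (hoff : ∀ i j, i ≠ j → (Q i * σ j).trace = 0) (hdiag : ∀ i, 0 < (Q i * σ i).trace) :
    UnambiguouslyDistinguishable σ := by
  obtain ⟨c, hc, hP0⟩ :=
    (posSemidef_sum Finset.univ fun i _ => hQ i).exists_pos_one_sub_smul_posSemidef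
  refine ⟨1 - c • ∑ i, Q i, fun i => c • Q i, hP0, fun i => (hQ i).smul hc.le,
    by rw [← Finset.smul_sum, sub_add_cancel], fun i j hij => ?_, fun i => ?_⟩
  · rw [smul_mul_assoc, trace_smul, hoff i j hij, smul_zero]
  · rw [smul_mul_assoc, trace_smul]
    exact smul_pos hc (hdiag i)

end

theorem Submodule.exists_dual_forall_eq_zero_of_span_not_le {K M : Type*} [Field K]
    [AddCommGroup M] [Module K M] {s : Set M} {p : Submodule K M} (h : ¬ span K s ≤ p) :
    ∃ f : Module.Dual K M, (∀ y ∈ p, f y = 0) ∧ ∃ x ∈ s, f x ≠ 0 := by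
  obtain ⟨x, hxs, hxp⟩ := Set.not_subset.mp (mt span_le.mpr h)
  obtain ⟨f, hfx, hfp⟩ := p.exists_dual_map_eq_bot_of_notMem hxp inferInstance
  exact ⟨f, fun y hy => by simpa [hfp] using mem_map_of_mem (f := f) hy, x, hxs, hfx⟩

theorem Matrix.dual_apply_eq_sum {R m n : Type*} [CommSemiring R] [Fintype m] [Fintype n]
    [DecidableEq m] [DecidableEq n] (f : Module.Dual R (Matrix m n R)) (A : Matrix m n R) :
    f A = ∑ a, ∑ b, A a b * f (single a b 1) := by
  conv_lhs => rw [matrix_eq_sum_single A]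
  simp only [map_sum]
  refine Finset.sum_congr rfl fun a _ => Finset.sum_congr rfl fun b _ => ?_
  rw [← smul_eq_mul, ← map_smul, smul_single, smul_eq_mul, mul_one]

theorem Matrix.kronecker_one_mulVec_diag_apply {R κ ι : Type*} [CommSemiring R] [Fintype ι]
    [DecidableEq ι] (A : Matrix κ ι R) (α : ι → R) (p : κ × ι) :
    ((A ⊗ₖ (1 : Matrix ι ι R)) *ᵥ fun q => if q.1 = q.2 then α q.1 else 0) p =
      A p.1 p.2 * α p.2 := by
  simp [mulVec, dotProduct, one_apply, Fintype.sum_prod_type]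

theorem Matrix.exists_star_dotProduct_kronecker_one_mulVec_eq {𝕜 κ ι : Type*} [Field 𝕜]
    [StarRing 𝕜] [Fintype κ] [Fintype ι] [DecidableEq κ] [DecidableEq ι] {α : ι → 𝕜}
    (hα : ∀ t, α t ≠ 0) (f : Module.Dual 𝕜 (Matrix κ ι 𝕜)) :
    ∃ w : κ × ι → 𝕜, ∀ A : Matrix κ ι 𝕜,
      star w ⬝ᵥ ((A ⊗ₖ (1 : Matrix ι ι 𝕜)) *ᵥ fun q => if q.1 = q.2 then α q.1 else 0) = f A := by
  refine ⟨fun p => star (f (single p.1 p.2 1) / α p.2), fun A => ?_⟩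
  rw [dual_apply_eq_sum f A, ← Fintype.sum_prod_type']
  refine Finset.sum_congr rfl fun p _ => ?_
  rw [Pi.star_apply, star_star, kronecker_one_mulVec_diag_apply]
  field_simp [hα p.2]

theorem Matrix.trace_vecMulVec_mul_vecMulVec_star {R ι : Type*} [CommSemiring R] [StarRing R]
    [Fintype ι] (w u : ι → R) :
    (vecMulVec w (star w) * vecMulVec u (star u)).trace = (star w ⬝ᵥ u) * star (star w ⬝ᵥ u) := by
  rw [vecMulVec_mul_vecMulVec, trace_vecMulVec, dotProduct_smul, smul_eq_mul,
    dotProduct_comm w, star_dotProduct u w]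

theorem Matrix.mul_vecMulVec_star_mul_conjTranspose_s2 {R m n : Type*} [CommSemiring R]
    [StarRing R] [Fintype m] [Fintype n] (B : Matrix m n R) (v : n → R) :
    B * vecMulVec v (star v) * Bᴴ = vecMulVec (B *ᵥ v) (star (B *ᵥ v)) := by
  rw [mul_vecMulVec, vecMulVec_mul, star_mulVec]

theorem QuantumOp.trace_vecMulVec_mul_output {d : ℕ} (E : QuantumOp d) (da : ℕ)
    (ψ w : Fin d × Fin da → ℂ) :
    (vecMulVec w (star w) * E.output da ψ).trace =
      ∑ k, (star w ⬝ᵥ ((E.K k ⊗ₖ 1) *ᵥ ψ)) * star (star w ⬝ᵥ ((E.K k ⊗ₖ 1) *ᵥ ψ)) := by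
  simp only [QuantumOp.output, Matrix.mul_sum, trace_sum, mul_vecMulVec_star_mul_conjTranspose_s2,
    trace_vecMulVec_mul_vecMulVec_star]

theorem outputs_unambig_of_full_schmidt_general {d n : ℕ} (E : Fin n → QuantumOp d)
    (h : ∀ i, ¬ ((E i).supp ≤ ⨆ j ≠ i, (E j).supp))
    (α : Fin d → ℝ) (hα : ∀ t, 0 < α t)
    (ψ : Fin d × Fin d → ℂ)
    (hψ : ψ = fun p => if p.1 = p.2 then (α p.1 : ℂ) else 0) :
    UnambiguouslyDistinguishable (fun i => (E i).output d ψ) := by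
  have hsep : ∀ i, ∃ f : Module.Dual ℂ (Matrix (Fin d) (Fin d) ℂ),
      (∀ j ≠ i, ∀ k, f ((E j).K k) = 0) ∧ ∃ k, f ((E i).K k) ≠ 0 := fun i => by
    obtain ⟨f, hf0, -, ⟨k, rfl⟩, hfk⟩ :=
      Submodule.exists_dual_forall_eq_zero_of_span_not_le (h i)
    refine ⟨f, fun j hj k => hf0 _ ?_, k, hfk⟩
    exact Submodule.mem_iSup_of_mem j <|
      Submodule.mem_iSup_of_mem hj <| Submodule.subset_span ⟨k, rfl⟩
  choose f hf0 hf using hsep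
  choose w hw using fun i => exists_star_dotProduct_kronecker_one_mulVec_eq
    (α := fun t => (α t : ℂ)) (fun t => Complex.ofReal_ne_zero.mpr (hα t).ne') (f i)
  subst hψ
  refine unambiguouslyDistinguishable_of_posSemidef (fun i => vecMulVec (w i) (star (w i)))
    (fun i => posSemidef_vecMulVec_self_star _) (fun i j hij => ?_) (fun i => ?_)
  · simp [QuantumOp.trace_vecMulVec_mul_output, hw, hf0 i j (Ne.symm hij)]
  · obtain ⟨k, hk⟩ := hf i
    rw [QuantumOp.trace_vecMulVec_mul_output]
    simp only [hw]
    exact Finset.sum_pos' (fun k _ => mul_star_self_nonneg _)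
      ⟨k, Finset.mem_univ k, mul_star_self_pos (IsRegular.of_ne_zero hk)⟩

/-- if for every i, supp(E_i) is not contained in Σ_{j≠i} supp(E_j), then for
any maximally-entangled-type unit input ψ = Σ_t α_t |t⟩|t⟩ with all α_t > 0, the output
states (E_i ⊗ I)(|ψ⟩⟨ψ|) are unambiguously distinguishable. -/
theorem outputs_unambig_of_full_schmidt {d n : ℕ} (E : Fin n → QuantumOp d)
    (h : ∀ i, ¬ ((E i).supp ≤ ⨆ j ≠ i, (E j).supp))
    (α : Fin d → ℝ) (hα : ∀ t, 0 < α t) (hunit : ∑ t, α t ^ 2 = 1)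
    (ψ : Fin d × Fin d → ℂ)
    (hψ : ψ = fun p => if p.1 = p.2 then (α p.1 : ℂ) else 0) :
    UnambiguouslyDistinguishable (fun i => (E i).output d ψ) :=
  outputs_unambig_of_full_schmidt_general E h α hα ψ hψ
end
end

section
/- Let ρ_1,…,ρ_n be density matrices on ℂ^D such that for all i ≠ j, the column space of ρ_i is not contained in the column space of ρ_j. Then the n-fold tensor powers ρ_1^{⊗n},…,ρ_n^{⊗n} are unambiguously distinguishable. -/
open Matrix Kronecker
open scoped ComplexOrder

noncomputable section

/-- The N-fold tensor (Kronecker) power of a matrix on ℂ^D, as a matrix on (ℂ^D)^{⊗N}. -/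
def tensorPow {D : ℕ} (ρ : Matrix (Fin D) (Fin D) ℂ) (N : ℕ) :
    Matrix (Fin N → Fin D) (Fin N → Fin D) ℂ :=
  fun a b => ∏ t, ρ (a t) (b t)

/-
For `i ≠ j` the range of `ρ i` is not contained in that of `ρ j`; as both are Hermitian, some
`u ∈ ker ρ j` has `ρ i u ≠ 0`. Let `Q i` be the tensor product over `t` of the rank-one
projections onto such vectors for the pairs `(i, t)`, with the identity as factor `i`. Then
`tr (Q i ρ j^{⊗n})` is the product of the traces of the factors: it vanishes for `j ≠ i`, whose
factor `j` annihilates `ρ j`, and is positive for `j = i`. Since every `Q i` is an orthogonal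
projection, `Π i = Q i / n` and `Π 0 = (1/n) ∑ i, (1 - Q i)` form a POVM.
-/

namespace Matrix

section PiKronecker

variable {ι R : Type*} [Fintype ι] [CommSemiring R] {m n p : ι → Type*}

def piKronecker (A : ∀ i, Matrix (m i) (n i) R) : Matrix (∀ i, m i) (∀ i, n i) R :=
  of fun a b => ∏ i, A i (a i) (b i)

@[simp]
theorem piKronecker_apply (A : ∀ i, Matrix (m i) (n i) R) (a : ∀ i, m i) (b : ∀ i, n i) :
    piKronecker A a b = ∏ i, A i (a i) (b i) :=
  rfl

theorem piKronecker_mul [DecidableEq ι] [∀ i, Fintype (n i)] (A : ∀ i, Matrix (m i) (n i) R)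
    (B : ∀ i, Matrix (n i) (p i) R) :
    piKronecker A * piKronecker B = piKronecker fun i => A i * B i := by
  ext a c
  simp only [mul_apply, piKronecker_apply, Fintype.prod_sum, Finset.prod_mul_distrib]

theorem trace_piKronecker [DecidableEq ι] [∀ i, Fintype (m i)] (A : ∀ i, Matrix (m i) (m i) R) :
    (piKronecker A).trace = ∏ i, (A i).trace := by
  simp only [trace, diag_apply, piKronecker_apply, Fintype.prod_sum]

theorem conjTranspose_piKronecker [StarRing R] (A : ∀ i, Matrix (m i) (n i) R) :
    (piKronecker A)ᴴ = piKronecker fun i => (A i)ᴴ := by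
  ext a b
  simp [star_prod]

theorem IsStarProjection.piKronecker [DecidableEq ι] [StarRing R] [∀ i, Fintype (m i)]
    {A : ∀ i, Matrix (m i) (m i) R} (hA : ∀ i, IsStarProjection (A i)) :
    IsStarProjection (piKronecker A) where
  isIdempotentElem := by
    rw [IsIdempotentElem, piKronecker_mul]
    exact congrArg _ (funext fun i => (hA i).isIdempotentElem)
  isSelfAdjoint := by
    rw [IsSelfAdjoint, star_eq_conjTranspose, conjTranspose_piKronecker]
    exact congrArg _ (funext fun i => (hA i).isSelfAdjoint)

end PiKronecker

section RCLike

variable {n 𝕜 : Type*} [Fintype n] [RCLike 𝕜]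

theorem IsStarProjection.posSemidef {A : Matrix n n 𝕜} (hA : IsStarProjection A) :
    A.PosSemidef := by
  open scoped MatrixOrder in exact nonneg_iff_posSemidef.mp hA.nonneg

/-- The orthogonal projection onto the line spanned by `u` (zero when `u = 0`). -/
def rankOneProj (u : n → 𝕜) : Matrix n n 𝕜 :=
  (star u ⬝ᵥ u)⁻¹ • vecMulVec u (star u)

theorem isStarProjection_rankOneProj (u : n → 𝕜) : IsStarProjection (rankOneProj u) where
  isIdempotentElem := by
    have hinv : (star u ⬝ᵥ u)⁻¹ * (star u ⬝ᵥ u)⁻¹ * (star u ⬝ᵥ u) = (star u ⬝ᵥ u)⁻¹ := by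
      rcases eq_or_ne (star u ⬝ᵥ u) 0 with h | h
      · simp [h]
      · field_simp
    rw [IsIdempotentElem, rankOneProj, smul_mul_smul, vecMulVec_mul_vecMulVec, vecMulVec_smul,
      smul_smul, hinv]
  isSelfAdjoint := by
    rw [IsSelfAdjoint, rankOneProj, star_smul, star_eq_conjTranspose, conjTranspose_vecMulVec,
      star_star, star_inv₀, ← star_dotProduct_star, star_star]

theorem trace_rankOneProj_mul (u : n → 𝕜) (A : Matrix n n 𝕜) :
    (rankOneProj u * A).trace = (star u ⬝ᵥ u)⁻¹ * (star u ⬝ᵥ A *ᵥ u) := by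
  rw [rankOneProj, smul_mul_assoc, trace_smul, vecMulVec_mul, trace_vecMulVec, dotProduct_comm u,
    ← dotProduct_mulVec, smul_eq_mul]

theorem PosSemidef.trace_rankOneProj_mul_pos {u : n → 𝕜} {A : Matrix n n 𝕜} (hA : A.PosSemidef)
    (hu : A *ᵥ u ≠ 0) : 0 < (rankOneProj u * A).trace := by
  have hu0 : u ≠ 0 := by
    rintro rfl
    exact hu (mulVec_zero A)
  rw [trace_rankOneProj_mul]
  exact mul_pos (RCLike.inv_pos.mpr (dotProduct_star_self_pos_iff.mpr hu0))
    ((hA.dotProduct_mulVec_nonneg u).lt_of_ne' (mt (hA.dotProduct_mulVec_zero_iff u).mp hu))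

-- Transported to `EuclideanSpace`, where the range of a self-adjoint map is `(ker)ᗮ`.
theorem IsHermitian.ker_le_ker_iff_range_le_range [DecidableEq n] {A B : Matrix n n 𝕜}
    (hA : A.IsHermitian) (hB : B.IsHermitian) :
    LinearMap.ker B.mulVecLin ≤ LinearMap.ker A.mulVecLin ↔
      LinearMap.range A.mulVecLin ≤ LinearMap.range B.mulVecLin := by
  let e := WithLp.linearEquiv 2 𝕜 (n → 𝕜)
  have hT (M : Matrix n n 𝕜) :
      toEuclideanLin M = e.symm.toLinearMap ∘ₗ M.mulVecLin ∘ₗ e.toLinearMap := rfl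
  have hrange {M : Matrix n n 𝕜} (hM : M.IsHermitian) :
      (LinearMap.range M.mulVecLin).map e.symm.toLinearMap =
        (LinearMap.ker (toEuclideanLin M))ᗮ := by
    rw [← (isSymmetric_toEuclideanLin_iff.mpr hM).orthogonal_range,
      Submodule.orthogonal_orthogonal, hT, LinearMap.range_comp, LinearEquiv.range_comp]
  have hker (M : Matrix n n 𝕜) :
      LinearMap.ker (toEuclideanLin M) = (LinearMap.ker M.mulVecLin).comap e.toLinearMap := by
    rw [hT, LinearEquiv.ker_comp, LinearMap.ker_comp]
  rw [← Submodule.comap_le_comap_iff_of_surjective e.surjective, ← hker, ← hker,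
    ← Submodule.orthogonal_le_orthogonal_iff, ← hrange hA, ← hrange hB,
    Submodule.map_le_map_iff_of_injective e.symm.injective]

end RCLike

end Matrix

theorem tensorPow_eq_piKronecker {D : ℕ} (ρ : Matrix (Fin D) (Fin D) ℂ) (N : ℕ) :
    tensorPow ρ N = piKronecker fun _ : Fin N => ρ :=
  rfl

theorem unambiguouslyDistinguishable_of_isStarProjection {μ : Type*} [Fintype μ] [DecidableEq μ]
    {n : ℕ} {σ : Fin n → Matrix μ μ ℂ} (Q : Fin n → Matrix μ μ ℂ)
    (hQ : ∀ i, IsStarProjection (Q i)) (hzero : ∀ i j, i ≠ j → (Q i * σ j).trace = 0)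
    (hpos : ∀ i, 0 < (Q i * σ i).trace) : UnambiguouslyDistinguishable σ := by
  rcases n.eq_zero_or_pos with rfl | hn
  · exact ⟨1, 0, PosSemidef.one, fun i => i.elim0, by simp, fun i => i.elim0, fun i => i.elim0⟩
  have hinv : (0 : ℂ) < (n : ℂ)⁻¹ := RCLike.inv_pos.mpr (Nat.cast_pos.mpr hn)
  have htrace (i : Fin n) (A : Matrix μ μ ℂ) :
      ((n : ℂ)⁻¹ • Q i * A).trace = (n : ℂ)⁻¹ * (Q i * A).trace := by
    rw [smul_mul_assoc, trace_smul, smul_eq_mul]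
  have hP0 : 1 - ∑ i, (n : ℂ)⁻¹ • Q i = (n : ℂ)⁻¹ • ∑ i, (1 - Q i) := by
    simp only [Finset.smul_sum, smul_sub, Finset.sum_sub_distrib, Finset.sum_const,
      Finset.card_univ, Fintype.card_fin]
    rw [← Nat.cast_smul_eq_nsmul ℂ, smul_smul, inv_mul_cancel₀ (Nat.cast_ne_zero.mpr hn.ne'),
      one_smul]
  refine ⟨1 - ∑ i, (n : ℂ)⁻¹ • Q i, fun i => (n : ℂ)⁻¹ • Q i, ?_,
    fun i => (hQ i).posSemidef.smul hinv.le, sub_add_cancel _ _,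
    fun i j hij => by rw [htrace, hzero i j hij, mul_zero],
    fun i => by rw [htrace]; exact mul_pos hinv (hpos i)⟩
  rw [hP0]
  exact (posSemidef_sum _ fun i _ => (hQ i).one_sub.posSemidef).smul hinv.le

/-- if for all i ≠ j the column space of ρ_i is not contained in that of
ρ_j, then the n-fold tensor powers ρ_1^{⊗n}, …, ρ_n^{⊗n} are unambiguously
distinguishable. -/
theorem tensorPow_unambig_of_ranges_not_le {D n : ℕ}
    (ρ : Fin n → Matrix (Fin D) (Fin D) ℂ)
    (hpsd : ∀ i, (ρ i).PosSemidef) (htr : ∀ i, (ρ i).trace = 1)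
    (h : ∀ i j, i ≠ j →
      ¬ LinearMap.range (ρ i).mulVecLin ≤ LinearMap.range (ρ j).mulVecLin) :
    UnambiguouslyDistinguishable (fun i => tensorPow (ρ i) n) := by
  have hvec (i j : Fin n) (hij : i ≠ j) : ∃ u, ρ j *ᵥ u = 0 ∧ ρ i *ᵥ u ≠ 0 := by
    simpa [SetLike.not_le_iff_exists,
      ← (hpsd i).isHermitian.ker_le_ker_iff_range_le_range (hpsd j).isHermitian] using h i j hij
  choose u hker hne using hvec
  let M (i t : Fin n) : Matrix (Fin D) (Fin D) ℂ :=
    if ht : t = i then 1 else rankOneProj (u i t (Ne.symm ht))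
  refine unambiguouslyDistinguishable_of_isStarProjection (fun i => piKronecker (M i))
    (fun i => IsStarProjection.piKronecker fun t => ?_) (fun i j hij => ?_) (fun i => ?_)
  · unfold M
    split_ifs
    exacts [.one _, isStarProjection_rankOneProj _]
  · rw [tensorPow_eq_piKronecker, piKronecker_mul, trace_piKronecker]
    refine Finset.prod_eq_zero (Finset.mem_univ j) ?_
    simp [M, hij.symm, trace_rankOneProj_mul, hker]
  · rw [tensorPow_eq_piKronecker, piKronecker_mul, trace_piKronecker]
    refine Finset.prod_pos fun t _ => ?_
    by_cases ht : t = i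
    · simp [M, ht, htr]
    · simpa [M, ht] using (hpsd i).trace_rankOneProj_mul_pos (hne i t (Ne.symm ht))
end
end

section
/- Let E_1,…,E_n be quantum operations on ℂ^d such that for every pair i ≠ j, supp(E_i) is not contained in supp(E_j). Then E_1,…,E_n can be unambiguously discriminated by n uses: there exist an ancilla dimension and a state ψ in (ℂ^d)^{⊗n} ⊗ ℂ^{d_a} (one may take ψ = φ^{⊗n} for any φ ∈ ℂ^d ⊗ ℂ^d with full Schmidt number) such that the output states (E_i^{⊗n} ⊗ I)(|ψ⟩⟨ψ|), i = 1,…,n, are unambiguously distinguishable. -/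
open Matrix Kronecker
open scoped ComplexOrder

noncomputable section

/-- N-fold Kronecker (tensor) power of a family of matrices, indexed by the
choices of one factor for each of the N slots. -/
def krausPow {d m : ℕ} (K : Fin m → Matrix (Fin d) (Fin d) ℂ) (N : ℕ)
    (ks : Fin N → Fin m) : Matrix (Fin N → Fin d) (Fin N → Fin d) ℂ :=
  fun a b => ∏ t, K (ks t) (a t) (b t)

/-- The output state (E^{⊗N} ⊗ I)(|ψ⟩⟨ψ|). -/
def QuantumOp.outputPow {d : ℕ} (E : QuantumOp d) (N da : ℕ)
    (ψ : (Fin N → Fin d) × Fin da → ℂ) :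
    Matrix ((Fin N → Fin d) × Fin da) ((Fin N → Fin d) × Fin da) ℂ :=
  ∑ ks : Fin N → Fin E.m,
    (krausPow E.K N ks ⊗ₖ (1 : Matrix (Fin da) (Fin da) ℂ)) * vecMulVec ψ (star ψ) *
      (krausPow E.K N ks ⊗ₖ (1 : Matrix (Fin da) (Fin da) ℂ))ᴴ



/-- separation by inner product -/
lemma aux_sep {V : Type*} [NormedAddCommGroup V] [InnerProductSpace ℂ V]
    [FiniteDimensional ℂ V] (W : Submodule ℂ V) (x : V) (hx : x ∉ W) :
    ∃ u : V, (∀ w ∈ W, (inner ℂ u w : ℂ) = 0) ∧ (inner ℂ u x : ℂ) ≠ 0 := by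
  haveI : CompleteSpace W := FiniteDimensional.complete ℂ W
  set p : V := (W.orthogonalProjectionOnto x : V) with hp
  have hmem : x - p ∈ Wᗮ := Submodule.sub_starProjection_mem_orthogonal (K := W) x
  have hpW : p ∈ W := (W.orthogonalProjectionOnto x).2
  refine ⟨x - p, fun w hw => (Submodule.mem_orthogonal' W _).1 hmem w hw, ?_⟩
  have hxp : x - p ≠ 0 := by
    intro h0
    rw [sub_eq_zero] at h0
    exact hx (h0 ▸ hpW)
  have h2 : (inner ℂ (x - p) p : ℂ) = 0 :=
    (Submodule.mem_orthogonal' W _).1 hmem p hpW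
  have h3 : (inner ℂ (x - p) x : ℂ) = inner ℂ (x - p) (x - p) := by
    have hx' : x = (x - p) + p := by abel
    calc (inner ℂ (x - p) x : ℂ) = inner ℂ (x - p) ((x - p) + p) := by rw [← hx']
      _ = inner ℂ (x - p) (x - p) + inner ℂ (x - p) p := inner_add_right _ _ _
      _ = inner ℂ (x - p) (x - p) := by rw [h2, add_zero]
  rw [h3]
  simpa [inner_self_eq_zero] using hxp

lemma aux_vmv_psd {κ : Type*} [Fintype κ] (v : κ → ℂ) :
    (vecMulVec v (star v)).PosSemidef := by
  rw [vecMulVec_eq Unit, ← conjTranspose_replicateCol]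
  exact posSemidef_self_mul_conjTranspose _

lemma aux_trace_vmv {κ : Type*} [Fintype κ] (a b x y : κ → ℂ) :
    (vecMulVec a b * vecMulVec x y).trace = (b ⬝ᵥ x) * (y ⬝ᵥ a) := by
  simp only [trace, diag_apply, Matrix.mul_apply, vecMulVec_apply, dotProduct]
  rw [Finset.sum_mul_sum, Finset.sum_comm]
  exact Finset.sum_congr rfl fun p _ => Finset.sum_congr rfl fun q _ => by ring

lemma aux_conj_vmv {κ μ : Type*} [Fintype κ] [Fintype μ] (A : Matrix κ μ ℂ) (ψ : μ → ℂ) :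
    A * vecMulVec ψ (star ψ) * Aᴴ = vecMulVec (A.mulVec ψ) (star (A.mulVec ψ)) := by
  ext p q
  simp only [Matrix.mul_apply, vecMulVec_apply, conjTranspose_apply, Pi.star_apply,
    mulVec, dotProduct, star_sum, star_mul', Finset.sum_mul, Finset.mul_sum]
  exact Finset.sum_congr rfl fun r _ => Finset.sum_congr rfl fun s _ => by ring

lemma aux_star_dot {κ : Type*} [Fintype κ] (a b : κ → ℂ) :
    star b ⬝ᵥ a = star (star a ⬝ᵥ b) := by
  simp [dotProduct, star_sum, mul_comm]


lemma aux_dot_inner {κ : Type*} [Fintype κ] (x y : κ → ℂ) :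
    star x ⬝ᵥ y =
      (inner ℂ ((WithLp.equiv 2 (κ → ℂ)).symm x) ((WithLp.equiv 2 (κ → ℂ)).symm y) : ℂ) := by
  simp [dotProduct, PiLp.inner_apply, RCLike.inner_apply, mul_comm]

/-- the linear functional `M ↦ ∑ G a b * M a b` -/
def entryFunctional {ι : Type*} [Fintype ι] (G : Matrix ι ι ℂ) : Matrix ι ι ℂ →ₗ[ℂ] ℂ where
  toFun M := ∑ a, ∑ b, G a b * M a b
  map_add' M N := by
    simp [Matrix.add_apply, mul_add, Finset.sum_add_distrib]
  map_smul' c M := by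
    simp [Matrix.smul_apply, Finset.mul_sum, smul_eq_mul]
    congr 1; ext a; congr 1; ext b; ring

lemma entryFunctional_apply {ι : Type*} [Fintype ι] (G M : Matrix ι ι ℂ) :
    entryFunctional G M = ∑ a, ∑ b, G a b * M a b := rfl

/-- matrices as a Euclidean space -/
def matE (ι : Type*) [Fintype ι] : Matrix ι ι ℂ ≃ₗ[ℂ] EuclideanSpace ℂ (ι × ι) where
  toFun M := (WithLp.equiv 2 _).symm (fun pq => M pq.1 pq.2)
  invFun x := Matrix.of fun p q => x (p, q)
  map_add' _ _ := rfl
  map_smul' _ _ := rfl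
  left_inv _ := rfl
  right_inv _ := rfl

lemma exists_entry_functional_sep {ι : Type*} [Fintype ι] [DecidableEq ι]
    (S : Submodule ℂ (Matrix ι ι ℂ)) (A : Matrix ι ι ℂ) (hA : A ∉ S) :
    ∃ G : Matrix ι ι ℂ, (∀ B ∈ S, entryFunctional G B = 0) ∧ entryFunctional G A ≠ 0 := by
  classical
  set W : Submodule ℂ (EuclideanSpace ℂ (ι × ι)) := S.map (matE ι).toLinearMap with hW
  have hx : (matE ι) A ∉ W := by
    intro hmem
    obtain ⟨B, hB, hBA⟩ := hmem
    have : B = A := (matE ι).injective hBA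
    exact hA (this ▸ hB)
  obtain ⟨u, hu0, hu1⟩ := aux_sep W ((matE ι) A) hx
  refine ⟨Matrix.of fun p q => (starRingEnd ℂ) (u (p, q)), ?_, ?_⟩
  · intro B hB
    have h5 := hu0 ((matE ι) B) ⟨B, hB, rfl⟩
    rw [entryFunctional_apply]
    simp only [Matrix.of_apply]
    rw [← Fintype.sum_prod_type']
    simp only [PiLp.inner_apply, RCLike.inner_apply] at h5
    simpa [matE, Prod.mk.eta, mul_comm] using h5
  · rw [entryFunctional_apply]
    simp only [Matrix.of_apply]
    rw [← Fintype.sum_prod_type']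
    simp only [PiLp.inner_apply, RCLike.inner_apply] at hu1
    simpa [matE, Prod.mk.eta, mul_comm] using hu1

lemma entryFunctional_tensor {d n : ℕ} (G F : Fin n → Matrix (Fin d) (Fin d) ℂ) :
    entryFunctional (Matrix.of fun a b : Fin n → Fin d => ∏ t, G t (a t) (b t))
      (Matrix.of fun a b : Fin n → Fin d => ∏ t, F t (a t) (b t))
      = ∏ t, entryFunctional (G t) (F t) := by
  classical
  simp only [entryFunctional_apply, Matrix.of_apply]
  calc ∑ a : Fin n → Fin d, ∑ b : Fin n → Fin d,
        (∏ t, G t (a t) (b t)) * ∏ t, F t (a t) (b t)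
      = ∑ a : Fin n → Fin d, ∑ b : Fin n → Fin d,
        ∏ t, (G t (a t) (b t) * F t (a t) (b t)) := by
        refine Finset.sum_congr rfl fun a _ => Finset.sum_congr rfl fun b _ => ?_
        rw [Finset.prod_mul_distrib]
    _ = ∑ ab : (Fin n → Fin d) × (Fin n → Fin d),
        ∏ t, (G t (ab.1 t) (ab.2 t) * F t (ab.1 t) (ab.2 t)) := by
        rw [Fintype.sum_prod_type]
    _ = ∑ x : Fin n → Fin d × Fin d,
        ∏ t, (G t (x t).1 (x t).2 * F t (x t).1 (x t).2) := by
        refine (Fintype.sum_equiv (Equiv.arrowProdEquivProdArrow (Fin n) (fun _ => Fin d) (fun _ => Fin d))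
          _ _ fun x => ?_).symm
        rfl
    _ = ∏ t, ∑ pq : Fin d × Fin d, G t pq.1 pq.2 * F t pq.1 pq.2 := by
        rw [Finset.prod_univ_sum]
        rw [Fintype.piFinset_univ]
    _ = ∏ t, ∑ p, ∑ q, G t p q * F t p q := by
        refine Finset.prod_congr rfl fun t _ => ?_
        rw [Fintype.sum_prod_type]

lemma tensor_mem_span {d n m : ℕ} (K : Fin m → Matrix (Fin d) (Fin d) ℂ)
    (F : Fin n → Matrix (Fin d) (Fin d) ℂ)
    (hF : ∀ t, F t ∈ Submodule.span ℂ (Set.range K)) :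
    (Matrix.of fun a b : Fin n → Fin d => ∏ t, F t (a t) (b t)) ∈
      Submodule.span ℂ (Set.range (krausPow K n)) := by
  classical
  choose c hc using fun t => (Submodule.mem_span_range_iff_exists_fun ℂ).1 (hF t)
  have key : (Matrix.of fun a b : Fin n → Fin d => ∏ t, F t (a t) (b t))
      = ∑ ks : Fin n → Fin m, (∏ t, c t (ks t)) • krausPow K n ks := by
    ext a b
    simp only [Matrix.of_apply, Matrix.sum_apply, Matrix.smul_apply, krausPow, smul_eq_mul]
    have hFt : ∀ t, F t (a t) (b t) = ∑ k, c t k * K k (a t) (b t) := by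
      intro t
      rw [← hc t]
      simp [Matrix.sum_apply]
    simp_rw [hFt]
    rw [Finset.prod_univ_sum, Fintype.piFinset_univ]
    exact Finset.sum_congr rfl fun ks _ => Finset.prod_mul_distrib
  rw [key]
  exact Submodule.sum_mem _ fun ks _ =>
    Submodule.smul_mem _ _ (Submodule.subset_span ⟨ks, rfl⟩)

lemma aux_kron_mulVec {d n : ℕ} (e : (Fin n → Fin d) ≃ Fin (d ^ n)) (c : ℂ)
    (M : Matrix (Fin n → Fin d) (Fin n → Fin d) ℂ) :
    (M ⊗ₖ (1 : Matrix (Fin (d ^ n)) (Fin (d ^ n)) ℂ)).mulVec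
        (fun p => if e p.1 = p.2 then c else 0)
      = fun p => c * M p.1 (e.symm p.2) := by
  classical
  funext p
  obtain ⟨a, x⟩ := p
  simp only [mulVec, dotProduct, Fintype.sum_prod_type, kroneckerMap_apply, one_apply,
    mul_ite, mul_one, mul_zero, ite_mul, zero_mul, Finset.sum_ite_eq, Finset.sum_ite_eq',
    Finset.mem_univ, if_true]
  rw [Finset.sum_congr rfl (fun b _ =>
    if_congr (e.symm_apply_eq).symm rfl rfl)]
  rw [Finset.sum_ite_eq Finset.univ (e.symm x) (fun b => M a b * c)]
  simp [mul_comm]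

lemma aux_vmv_quad {κ : Type*} [Fintype κ] (v y : κ → ℂ) :
    star y ⬝ᵥ (vecMulVec v (star v)).mulVec y = star y ⬝ᵥ v * (star v ⬝ᵥ y) := by
  simp only [mulVec, vecMulVec_apply, dotProduct, Pi.star_apply, Finset.mul_sum]
  rw [Finset.sum_comm]
  exact Finset.sum_congr rfl fun i _ => by
    rw [Finset.sum_mul]
    exact Finset.sum_congr rfl fun x _ => by ring

set_option maxHeartbeats 1000000 in
/-- if for all i ≠ j, supp(E_i) is not contained in supp(E_j), then the
operations can be unambiguously discriminated by n uses: there are an ancilla dimension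
and a unit input state ψ ∈ (ℂ^d)^{⊗n} ⊗ ℂ^{d_a} whose output states
(E_i^{⊗n} ⊗ I)(|ψ⟩⟨ψ|) are unambiguously distinguishable. -/
theorem unambig_by_n_uses {d n : ℕ} (hd : 0 < d) (E : Fin n → QuantumOp d)
    (h : ∀ i j, i ≠ j → ¬ (E i).supp ≤ (E j).supp) :
    ∃ da : ℕ, 0 < da ∧ ∃ ψ : (Fin n → Fin d) × Fin da → ℂ,
      star ψ ⬝ᵥ ψ = 1 ∧
      UnambiguouslyDistinguishable (fun i => (E i).outputPow n da ψ) := by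
  classical
  have hdn : 0 < d ^ n := pow_pos hd n
  refine ⟨d ^ n, hdn, ?_⟩
  set e : (Fin n → Fin d) ≃ Fin (d ^ n) := finFunctionFinEquiv with he
  have hdnR : (0:ℝ) < ((d ^ n : ℕ) : ℝ) := by exact_mod_cast hdn
  set c : ℝ := (Real.sqrt (d ^ n))⁻¹ with hcdef
  have hc0 : 0 < c := by
    rw [hcdef]
    exact inv_pos.2 (Real.sqrt_pos.2 (by exact_mod_cast hdnR))
  have hcC : ((c : ℂ)) ≠ 0 := by exact_mod_cast hc0.ne'
  have hc2 : (c:ℂ) * (c:ℂ) = (((d ^ n : ℕ) : ℝ)⁻¹ : ℂ) := by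
    rw [← Complex.ofReal_mul]
    congr 1
    rw [hcdef, ← mul_inv, Real.mul_self_sqrt (by exact_mod_cast hdnR.le)]
    norm_num
  set ψ : (Fin n → Fin d) × Fin (d ^ n) → ℂ :=
    fun p => if e p.1 = p.2 then (c : ℂ) else 0 with hψ
  refine ⟨ψ, ?_, ?_⟩
  · -- normalization
    have h1 : star ψ ⬝ᵥ ψ = ∑ _a : Fin n → Fin d, ((c:ℂ) * (c:ℂ)) := by
      simp [dotProduct, Fintype.sum_prod_type, hψ, apply_ite, mul_ite, ite_mul,
        Finset.sum_ite_eq, Finset.sum_ite_eq']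
    rw [h1, Finset.sum_const, Finset.card_univ, hc2]
    have hcard : Fintype.card (Fin n → Fin d) = d ^ n := by
      simp [Fintype.card_fun]
    rw [hcard, nsmul_eq_mul]
    apply mul_inv_cancel₀
    exact_mod_cast hdnR.ne'
  · -- main distinguishability
    set TL : Matrix (Fin n → Fin d) (Fin n → Fin d) ℂ →ₗ[ℂ]
        EuclideanSpace ℂ ((Fin n → Fin d) × Fin (d ^ n)) :=
      { toFun := fun M => (WithLp.equiv 2 _).symm (fun p => M p.1 (e.symm p.2))
        map_add' := fun _ _ => rfl
        map_smul' := fun _ _ => rfl } with hTL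
    have hTLinj : Function.Injective TL := by
      intro M N hMN
      ext a b
      have h2 := congrFun (congrArg (WithLp.equiv 2 _) hMN) (a, e b)
      simpa [hTL] using h2
    have main : ∀ i : Fin n, ∃ u : ((Fin n → Fin d) × Fin (d ^ n)) → ℂ,
        (∀ j, j ≠ i → ∀ ks : Fin n → Fin (E j).m,
          star u ⬝ᵥ ((krausPow (E j).K n ks ⊗ₖ
            (1 : Matrix (Fin (d^n)) (Fin (d^n)) ℂ)).mulVec ψ) = 0)
        ∧ (∃ ks : Fin n → Fin (E i).m,
          star u ⬝ᵥ ((krausPow (E i).K n ks ⊗ₖ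
            (1 : Matrix (Fin (d^n)) (Fin (d^n)) ℂ)).mulVec ψ) ≠ 0) := by
      intro i
      have hAex : ∀ j : Fin n, j ≠ i → ∃ A, A ∈ (E i).supp ∧ A ∉ (E j).supp := by
        intro j hj
        exact SetLike.not_le_iff_exists.1 (h i j (Ne.symm hj))
      choose A hA1 hA2 using hAex
      obtain ⟨k0, hk0⟩ : ∃ k, (E i).K k ≠ 0 := by
        by_contra hno
        push_neg at hno
        have h1 := (E i).complete
        rw [Finset.sum_eq_zero (fun k _ => by rw [hno k]; simp)] at h1
        have h2 := congrFun (congrFun h1 ⟨0, hd⟩) ⟨0, hd⟩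
        simp [Matrix.one_apply] at h2
      set F : Fin n → Matrix (Fin d) (Fin d) ℂ :=
        fun t => if ht : t = i then (E i).K k0 else A t ht with hF
      have hFmem : ∀ t, F t ∈ (E i).supp := by
        intro t
        by_cases ht : t = i
        · rw [hF]
          simp only [dif_pos ht]
          exact Submodule.subset_span ⟨k0, rfl⟩
        · rw [hF]
          simp only [dif_neg ht]
          exact hA1 t ht
      have hGex : ∀ t : Fin n, ∃ G : Matrix (Fin d) (Fin d) ℂ,
          (t ≠ i → ∀ B ∈ (E t).supp, entryFunctional G B = 0)
          ∧ entryFunctional G (F t) ≠ 0 := by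
        intro t
        by_cases ht : t = i
        · obtain ⟨G, _, hG2⟩ := exists_entry_functional_sep (⊥ : Submodule ℂ _)
            ((E i).K k0) (by simpa [Submodule.mem_bot] using hk0)
          refine ⟨G, fun hti => absurd ht hti, ?_⟩
          rw [hF]; simpa [dif_pos ht] using hG2
        · obtain ⟨G, hG1, hG2⟩ := exists_entry_functional_sep ((E t).supp)
            (A t ht) (hA2 t ht)
          refine ⟨G, fun _ => hG1, ?_⟩
          rw [hF]; simpa [dif_neg ht] using hG2
      choose G hG1 hG2 using hGex
      set M : Matrix (Fin n → Fin d) (Fin n → Fin d) ℂ :=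
        Matrix.of fun a b => ∏ t, F t (a t) (b t) with hM
      have hMmem : M ∈ Submodule.span ℂ (Set.range (krausPow (E i).K n)) :=
        tensor_mem_span _ _ hFmem
      set Φ : Matrix (Fin n → Fin d) (Fin n → Fin d) ℂ →ₗ[ℂ] ℂ :=
        entryFunctional (Matrix.of fun a b : Fin n → Fin d => ∏ t, G t (a t) (b t)) with hΦ
      have hΦM : Φ M ≠ 0 := by
        rw [hΦ, hM, entryFunctional_tensor]
        exact Finset.prod_ne_zero_iff.2 fun t _ => hG2 t
      set U : Set (Matrix (Fin n → Fin d) (Fin n → Fin d) ℂ) :=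
        {N | ∃ j, j ≠ i ∧ ∃ ks : Fin n → Fin (E j).m, krausPow (E j).K n ks = N} with hU
      have hΦU : Submodule.span ℂ U ≤ LinearMap.ker Φ := by
        rw [Submodule.span_le]
        rintro N ⟨j, hj, ks, rfl⟩
        have hexp : Φ (krausPow (E j).K n ks)
            = ∏ t, entryFunctional (G t) ((E j).K (ks t)) := by
          rw [hΦ]
          exact entryFunctional_tensor G (fun t => (E j).K (ks t))
        simp only [SetLike.mem_coe, LinearMap.mem_ker]
        rw [hexp]
        refine Finset.prod_eq_zero (Finset.mem_univ j) ?_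
        exact hG1 j hj _ (Submodule.subset_span ⟨ks j, rfl⟩)
      have hMU : M ∉ Submodule.span ℂ U := fun hmem => hΦM (hΦU hmem)
      set W : Submodule ℂ (EuclideanSpace ℂ ((Fin n → Fin d) × Fin (d ^ n))) :=
        (Submodule.span ℂ U).map TL with hWdef
      have hxW : TL M ∉ W := by
        rintro ⟨N, hN, hNM⟩
        exact hMU (hTLinj hNM ▸ hN)
      obtain ⟨u', hu0, hu1⟩ := aux_sep W (TL M) hxW
      have hkey : ∀ N : Matrix (Fin n → Fin d) (Fin n → Fin d) ℂ,
          star ((WithLp.equiv 2 _) u') ⬝ᵥ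
              ((N ⊗ₖ (1 : Matrix (Fin (d^n)) (Fin (d^n)) ℂ)).mulVec ψ)
            = (c:ℂ) * inner ℂ u' (TL N) := by
        intro N
        rw [hψ, aux_kron_mulVec e (c:ℂ) N]
        simp only [dotProduct, PiLp.inner_apply, RCLike.inner_apply, Finset.mul_sum]
        refine Finset.sum_congr rfl fun p _ => ?_
        show star (u' p) * ((c:ℂ) * N p.1 (e.symm p.2))
          = (c:ℂ) * (N p.1 (e.symm p.2) * (starRingEnd ℂ) (u' p))
        rw [Complex.star_def]
        ring
      refine ⟨(WithLp.equiv 2 _) u', ?_, ?_⟩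
      · intro j hj ks
        rw [hkey]
        have hmem : TL (krausPow (E j).K n ks) ∈ W :=
          Submodule.mem_map_of_mem (Submodule.subset_span ⟨j, hj, ks, rfl⟩)
        rw [hu0 _ hmem, mul_zero]
      · by_contra hall
        push_neg at hall
        have hker : Submodule.span ℂ (Set.range (krausPow (E i).K n)) ≤
            LinearMap.ker (((innerSL ℂ u').toLinearMap).comp TL) := by
          rw [Submodule.span_le]
          rintro N ⟨ks, rfl⟩
          have h3 := hall ks
          rw [hkey] at h3
          simp only [SetLike.mem_coe, LinearMap.mem_ker, LinearMap.comp_apply,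
            ContinuousLinearMap.coe_coe, innerSL_apply_apply]
          exact (mul_eq_zero.1 h3).resolve_left hcC
        have h4 := hker hMmem
        rw [LinearMap.mem_ker] at h4
        simp only [LinearMap.comp_apply, ContinuousLinearMap.coe_coe, innerSL_apply_apply] at h4
        exact hu1 h4
    choose u hu1 hu2 using main
    -- abbreviations
    set w : ∀ j : Fin n, (Fin n → Fin (E j).m) → ((Fin n → Fin d) × Fin (d ^ n)) → ℂ :=
      fun j ks => ((krausPow (E j).K n ks ⊗ₖ
        (1 : Matrix (Fin (d^n)) (Fin (d^n)) ℂ)).mulVec ψ) with hw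
    have hune : ∀ i, u i ≠ 0 := by
      intro i hu0
      obtain ⟨ks, hks⟩ := hu2 i
      apply hks
      rw [hu0]
      simp
    set ue : Fin n → EuclideanSpace ℂ ((Fin n → Fin d) × Fin (d ^ n)) :=
      fun i => (WithLp.equiv 2 _).symm (u i) with hue
    have huene : ∀ i, ue i ≠ 0 := fun i h0 => hune i (by
      have := congrArg (WithLp.equiv 2 _) h0
      simpa [hue] using this)
    have hnpos : ∀ _i : Fin n, (0:ℝ) < n := fun i => by
      exact_mod_cast Fin.pos i
    set s : Fin n → ℝ := fun i => (Real.sqrt (n * ‖ue i‖^2))⁻¹ with hs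
    have hspos : ∀ i, 0 < s i := by
      intro i
      rw [hs]
      apply inv_pos.2
      apply Real.sqrt_pos.2
      exact mul_pos (hnpos i) (pow_pos (norm_pos_iff.2 (huene i)) 2)
    set v : Fin n → ((Fin n → Fin d) × Fin (d ^ n)) → ℂ :=
      fun i => (s i : ℂ) • u i with hv
    set ve : Fin n → EuclideanSpace ℂ ((Fin n → Fin d) × Fin (d ^ n)) :=
      fun i => (s i : ℂ) • ue i with hve
    have hs2 : ∀ i, s i ^ 2 = ((n : ℝ) * ‖ue i‖^2)⁻¹ := by
      intro i
      have h6 : (0:ℝ) ≤ (n:ℝ) * ‖ue i‖^2 := by positivity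
      rw [hs]
      simp only
      rw [inv_pow, Real.sq_sqrt h6]
    have hvnorm : ∀ i, ‖ve i‖^2 = 1 / n := by
      intro i
      have h6 : (0:ℝ) < ‖ue i‖^2 := pow_pos (norm_pos_iff.2 (huene i)) 2
      have h7 : (n:ℝ) ≠ 0 := (hnpos i).ne'
      rw [hve]
      simp only
      rw [norm_smul, mul_pow, Complex.norm_real, Real.norm_eq_abs, sq_abs, hs2 i]
      rw [mul_inv, mul_assoc, inv_mul_cancel₀ h6.ne', mul_one, one_div]
    set P : Fin n → Matrix ((Fin n → Fin d) × Fin (d ^ n))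
        ((Fin n → Fin d) × Fin (d ^ n)) ℂ :=
      fun i => vecMulVec (v i) (star (v i)) with hP
    have hσ : ∀ j, (E j).outputPow n (d^n) ψ
        = ∑ ks : Fin n → Fin (E j).m, vecMulVec (w j ks) (star (w j ks)) := by
      intro j
      unfold QuantumOp.outputPow
      exact Finset.sum_congr rfl fun ks _ => aux_conj_vmv _ _
    have hdotv : ∀ i (y : ((Fin n → Fin d) × Fin (d ^ n)) → ℂ),
        star (v i) ⬝ᵥ y = (s i : ℂ) * (star (u i) ⬝ᵥ y) := by
      intro i y
      rw [hv]
      simp only [star_smul, smul_dotProduct, Complex.star_def, Complex.conj_ofReal,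
        smul_eq_mul]
    have htr : ∀ i j, (P i * (E j).outputPow n (d^n) ψ).trace
        = ∑ ks : Fin n → Fin (E j).m,
          ((Complex.normSq (star (v i) ⬝ᵥ w j ks) : ℝ) : ℂ) := by
      intro i j
      rw [hσ j, Finset.mul_sum, trace_sum]
      refine Finset.sum_congr rfl fun ks _ => ?_
      simp only [hP]
      rw [aux_trace_vmv]
      rw [aux_star_dot (v i) (w j ks)]
      rw [Complex.star_def, Complex.mul_conj]
    refine ⟨1 - ∑ i, P i, P, ?_, fun i => aux_vmv_psd _, by abel, ?_, ?_⟩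
    · -- P0 PSD
      rw [Matrix.posSemidef_iff_dotProduct_mulVec]
      constructor
      · show (1 - ∑ i, P i)ᴴ = _
        rw [conjTranspose_sub, conjTranspose_one, conjTranspose_sum]
        congr 1
        exact Finset.sum_congr rfl fun i _ => (aux_vmv_psd (v i)).1
      · intro x
        set xe : EuclideanSpace ℂ ((Fin n → Fin d) × Fin (d ^ n)) :=
          (WithLp.equiv 2 _).symm x with hxe
        have hq : ∀ i, star x ⬝ᵥ (P i).mulVec x
            = ((Complex.normSq (star (v i) ⬝ᵥ x) : ℝ) : ℂ) := by
          intro i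
          simp only [hP]
          rw [aux_vmv_quad, aux_star_dot (v i) x, Complex.star_def, mul_comm,
            Complex.mul_conj]
        have hz : ∀ i, star (v i) ⬝ᵥ x = inner ℂ (ve i) xe := by
          intro i
          rw [aux_dot_inner]
          rfl
        have hxx : star x ⬝ᵥ x = ((‖xe‖^2 : ℝ) : ℂ) := by
          rw [aux_dot_inner]
          rw [show ((WithLp.equiv 2 _).symm x) = xe from rfl]
          rw [inner_self_eq_norm_sq_to_K]
          norm_num
        have hexpand : star x ⬝ᵥ (1 - ∑ i, P i).mulVec x
            = ((‖xe‖^2 - ∑ i, Complex.normSq (inner ℂ (ve i) xe) : ℝ) : ℂ) := by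
          rw [sub_mulVec, one_mulVec, dotProduct_sub, hxx]
          have hsum : (∑ i, P i) *ᵥ x = ∑ i, (P i) *ᵥ x := by
            funext p
            simp only [mulVec, dotProduct, Matrix.sum_apply, Finset.sum_apply,
              Finset.sum_mul]
            exact Finset.sum_comm
          have hds : star x ⬝ᵥ (∑ i, (P i) *ᵥ x) = ∑ i, star x ⬝ᵥ ((P i) *ᵥ x) := by
            simp only [dotProduct, Finset.sum_apply, Finset.mul_sum]
            exact Finset.sum_comm
          rw [hsum, hds]
          rw [Finset.sum_congr rfl (fun i _ => by rw [hq i, hz i])]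
          push_cast
          ring
        rw [hexpand, Complex.zero_le_real, sub_nonneg]
        have hci : ∀ i, Complex.normSq (inner ℂ (ve i) xe) ≤ 1/n * ‖xe‖^2 := by
          intro i
          have h8 : ‖(inner ℂ (ve i) xe : ℂ)‖^2 ≤ (‖ve i‖ * ‖xe‖)^2 :=
            pow_le_pow_left₀ (norm_nonneg _) (norm_inner_le_norm (ve i) xe) 2
          rw [Complex.normSq_eq_norm_sq]
          calc ‖(inner ℂ (ve i) xe : ℂ)‖^2 ≤ (‖ve i‖ * ‖xe‖)^2 := h8
            _ = ‖ve i‖^2 * ‖xe‖^2 := mul_pow _ _ _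
            _ = 1/n * ‖xe‖^2 := by rw [hvnorm i]
        calc ∑ i, Complex.normSq (inner ℂ (ve i) xe)
            ≤ ∑ _i : Fin n, 1/(n:ℝ) * ‖xe‖^2 := Finset.sum_le_sum fun i _ => hci i
          _ ≤ ‖xe‖^2 := by
              rw [Finset.sum_const, Finset.card_univ, Fintype.card_fin, nsmul_eq_mul]
              rcases Nat.eq_zero_or_pos n with hn | hn
              · subst hn
                simp only [Nat.cast_zero, zero_mul]
                positivity
              · have h9 : (n:ℝ) ≠ 0 := by exact_mod_cast hn.ne'
                rw [show (n:ℝ) * (1/(n:ℝ) * ‖xe‖^2) = ‖xe‖^2 by field_simp]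
    · -- off-diagonal
      intro i j hij
      rw [htr i j]
      apply Finset.sum_eq_zero
      intro ks _
      rw [hdotv, hu1 i j (Ne.symm hij) ks, mul_zero]
      simp
    · -- diagonal
      intro i
      rw [htr i i]
      rw [← Complex.ofReal_sum]
      rw [Complex.zero_lt_real]
      obtain ⟨ks0, hks0⟩ := hu2 i
      have hterm : 0 < Complex.normSq (star (v i) ⬝ᵥ w i ks0) := by
        apply Complex.normSq_pos.2
        rw [hdotv]
        exact mul_ne_zero (by exact_mod_cast (hspos i).ne') hks0
      refine lt_of_lt_of_le hterm ?_
      refine Finset.single_le_sum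
        (f := fun ks => Complex.normSq (star (v i) ⬝ᵥ w i ks))
        (fun ks _ => Complex.normSq_nonneg _) (Finset.mem_univ ks0)
end
end

section
/- Let E_1,…,E_n be quantum operations on ℂ^d such that for some pair i ≠ j, supp(E_i) ⊆ supp(E_j). Then for every N ≥ 1, the operations cannot be unambiguously discriminated by N uses: for every ancilla dimension d_a and every vector ψ ∈ (ℂ^d)^{⊗N} ⊗ ℂ^{d_a}, the output states (E_k^{⊗N} ⊗ I)(|ψ⟩⟨ψ|), k = 1,…,n, are not unambiguously distinguishable. -/
/-!
Let `Π_i` be the effect of an unambiguous measurement that is to detect `E_i`. Since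
`tr(Π_i σ_j) = 0` and `Π_i ⪰ 0`, `Π_i` annihilates every vector `(K ⊗ I)ψ` with `K` a Kraus
operator of `E_j^{⊗N}`. The inclusion of supports passes to tensor powers, so every Kraus
operator of `E_i^{⊗N}` is a combination of those of `E_j^{⊗N}`, and `Π_i` annihilates the
corresponding vectors as well; hence `tr(Π_i σ_i) = 0`.
-/

open Matrix Kronecker
open scoped ComplexOrder

noncomputable section

theorem Matrix.trace_mul_conj_vecMulVec {μ ν R : Type*} [Fintype μ] [Fintype ν] [CommRing R]
    [StarRing R] (Q : Matrix μ μ R) (A : Matrix μ ν R) (ψ : ν → R) :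
    (Q * (A * vecMulVec ψ (star ψ) * Aᴴ)).trace = star (A *ᵥ ψ) ⬝ᵥ Q *ᵥ (A *ᵥ ψ) := by
  rw [mul_vecMulVec, vecMulVec_mul, ← star_mulVec, mul_vecMulVec, trace_vecMulVec,
    dotProduct_comm]

theorem Matrix.PosSemidef.trace_mul_sum_conj_vecMulVec_eq_zero_iff {ι μ ν 𝕜 : Type*}
    [Fintype ι] [Fintype μ] [Fintype ν] [RCLike 𝕜] {Q : Matrix μ μ 𝕜} (hQ : Q.PosSemidef)
    (A : ι → Matrix μ ν 𝕜) (ψ : ν → 𝕜) :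
    (Q * ∑ k, A k * vecMulVec ψ (star ψ) * (A k)ᴴ).trace = 0 ↔ ∀ k, Q *ᵥ (A k *ᵥ ψ) = 0 := by
  simp only [Finset.mul_sum, trace_sum, trace_mul_conj_vecMulVec,
    Finset.sum_eq_zero_iff_of_nonneg fun k _ => hQ.dotProduct_mulVec_nonneg (A k *ᵥ ψ),
    Finset.mem_univ, true_imp_iff, hQ.dotProduct_mulVec_zero_iff]

theorem krausPow_mem_span_range {d m m' : ℕ} {K : Fin m → Matrix (Fin d) (Fin d) ℂ}
    {K' : Fin m' → Matrix (Fin d) (Fin d) ℂ} (hK : ∀ k, K k ∈ Submodule.span ℂ (Set.range K'))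
    (N : ℕ) (ks : Fin N → Fin m) :
    krausPow K N ks ∈ Submodule.span ℂ (Set.range (krausPow K' N)) := by
  choose c hc using fun k => (Submodule.mem_span_range_iff_exists_fun ℂ).mp (hK k)
  have hexpand : krausPow K N ks = ∑ ls, (∏ t, c (ks t) (ls t)) • krausPow K' N ls := by
    ext a b
    simp only [krausPow, ← hc, Matrix.sum_apply, Matrix.smul_apply, smul_eq_mul,
      Fintype.prod_sum, Finset.prod_mul_distrib]
  rw [hexpand]
  exact Submodule.sum_mem _ fun ls _ => Submodule.smul_mem _ _ (Submodule.subset_span ⟨ls, rfl⟩)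

/-- if supp(E_i) ⊆ supp(E_j) for some i ≠ j, then for every N ≥ 1 the
operations cannot be unambiguously discriminated by N uses: every choice of ancilla
dimension and input vector gives output states that are not unambiguously
distinguishable. -/
theorem not_unambig_by_N_uses {d n : ℕ} (E : Fin n → QuantumOp d)
    (i j : Fin n) (hij : i ≠ j) (h : (E i).supp ≤ (E j).supp) :
    ∀ N : ℕ, 1 ≤ N → ∀ (da : ℕ) (ψ : (Fin N → Fin d) × Fin da → ℂ),
      ¬ UnambiguouslyDistinguishable (fun k => (E k).outputPow N da ψ) := by
  rintro N - da ψ ⟨-, P, -, hP, -, hortho, hpos⟩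
  -- `g M = P i *ᵥ ((M ⊗ₖ 1) *ᵥ ψ)`, linear in `M`
  let g := (P i).mulVecLin ∘ₗ (mulVecBilin ℂ ℂ).flip ψ ∘ₗ
    (kroneckerBilinear (R := ℂ)).flip (1 : Matrix (Fin da) (Fin da) ℂ)
  have hj : ∀ ls, g (krausPow (E j).K N ls) = 0 :=
    ((hP i).trace_mul_sum_conj_vecMulVec_eq_zero_iff _ ψ).mp (hortho i j hij)
  have hi : ∀ ks, g (krausPow (E i).K N ks) = 0 := fun ks =>
    Submodule.span_le (p := LinearMap.ker g).mpr (Set.range_subset_iff.mpr hj)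
      (krausPow_mem_span_range (fun k => h (Submodule.subset_span ⟨k, rfl⟩)) N ks)
  exact (hpos i).ne' (((hP i).trace_mul_sum_conj_vecMulVec_eq_zero_iff _ ψ).mpr hi)
end
end

section
/- Let σ_1,…,σ_n be positive semidefinite matrices on ℂ^D, and suppose that for some index i, the column space of σ_i is contained in the sum of the column spaces of σ_j for j ≠ i. Then σ_1,…,σ_n are not unambiguously distinguishable: for any positive semidefinite matrix Π with tr(Π σ_j) = 0 for all j ≠ i, one also has tr(Π σ_i) = 0. -/
/-!
For positive semidefinite `P = BᴴB` and `Q = CᴴC`, `tr (P * Q) = ‖B Cᴴ‖²_F`, so a vanishing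
trace forces `P * Q = 0`. Hence a measurement operator `Π` orthogonal to every `σ j`, `j ≠ i`,
kills the ranges of these `σ j`, hence their sum, hence the range of `σ i`, and `tr (Π σ i) = 0`.
In particular no POVM element can detect `σ i` unambiguously.
-/

open Matrix Kronecker
open scoped ComplexOrder

noncomputable section

namespace Matrix

open scoped MatrixOrder in
theorem PosSemidef.mul_eq_zero_of_trace_mul_eq_zero {𝕜 n : Type*} [RCLike 𝕜] [Fintype n]
    {P Q : Matrix n n 𝕜} (hP : P.PosSemidef) (hQ : Q.PosSemidef) (htr : (P * Q).trace = 0) :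
    P * Q = 0 := by
  classical
  obtain ⟨B, rfl⟩ := CStarAlgebra.nonneg_iff_eq_star_mul_self.mp hP.nonneg
  obtain ⟨C, rfl⟩ := CStarAlgebra.nonneg_iff_eq_star_mul_self.mp hQ.nonneg
  simp only [star_eq_conjTranspose] at htr ⊢
  have hBC : B * Cᴴ = 0 := by
    rw [← trace_mul_conjTranspose_self_eq_zero_iff, conjTranspose_mul, conjTranspose_conjTranspose,
      ← mul_assoc, trace_mul_comm]
    simpa only [mul_assoc] using htr
  rw [mul_assoc, ← mul_assoc B, hBC, zero_mul, mul_zero]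

theorem range_mulVecLin_le_ker_mulVecLin_iff {R l m n : Type*} [CommSemiring R] [Fintype m]
    [Fintype n] {A : Matrix l m R} {B : Matrix m n R} :
    LinearMap.range B.mulVecLin ≤ LinearMap.ker A.mulVecLin ↔ A * B = 0 := by
  classical
  rw [LinearMap.range_le_ker_iff, ← mulVecLin_mul, ← toLin'_apply', LinearEquiv.map_eq_zero_iff]

theorem mul_eq_zero_of_range_le_iSup {R ι l m n k : Type*} [CommSemiring R] [Fintype m]
    [Fintype n] [Fintype k] {p : ι → Prop} {A : Matrix l m R} {B : Matrix m n R}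
    {σ : ι → Matrix m k R}
    (hB : LinearMap.range B.mulVecLin ≤ ⨆ (j) (_ : p j), LinearMap.range (σ j).mulVecLin)
    (hσ : ∀ j, p j → A * σ j = 0) : A * B = 0 :=
  range_mulVecLin_le_ker_mulVecLin_iff.mp <| hB.trans <| iSup₂_le fun j hj ↦
    range_mulVecLin_le_ker_mulVecLin_iff.mpr (hσ j hj)

theorem PosSemidef.trace_mul_eq_zero_of_range_le_iSup {𝕜 ι n : Type*} [RCLike 𝕜] [Fintype n]
    {p : ι → Prop} {P Q : Matrix n n 𝕜} {σ : ι → Matrix n n 𝕜} (hP : P.PosSemidef)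
    (hσ : ∀ j, p j → (σ j).PosSemidef)
    (hQ : LinearMap.range Q.mulVecLin ≤ ⨆ (j) (_ : p j), LinearMap.range (σ j).mulVecLin)
    (htr : ∀ j, p j → (P * σ j).trace = 0) : (P * Q).trace = 0 := by
  rw [mul_eq_zero_of_range_le_iSup hQ fun j hj ↦
    hP.mul_eq_zero_of_trace_mul_eq_zero (hσ j hj) (htr j hj), trace_zero]

end Matrix

/-- if the column space of σ_i is contained in the sum of the column
spaces of the σ_j, j ≠ i, then σ_1, …, σ_n are not unambiguously distinguishable;
indeed any PSD Π with tr(Π σ_j) = 0 for all j ≠ i also has tr(Π σ_i) = 0. -/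
theorem not_unambig_of_range_le_sup {D n : ℕ}
    (σ : Fin n → Matrix (Fin D) (Fin D) ℂ) (hpsd : ∀ k, (σ k).PosSemidef) (i : Fin n)
    (h : LinearMap.range (σ i).mulVecLin ≤ ⨆ j ≠ i, LinearMap.range (σ j).mulVecLin) :
    (¬ UnambiguouslyDistinguishable σ) ∧
    ∀ P : Matrix (Fin D) (Fin D) ℂ, P.PosSemidef →
      (∀ j, j ≠ i → (P * σ j).trace = 0) → (P * σ i).trace = 0 := by
  have detects_nothing : ∀ P : Matrix (Fin D) (Fin D) ℂ, P.PosSemidef →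
      (∀ j, j ≠ i → (P * σ j).trace = 0) → (P * σ i).trace = 0 :=
    fun P hP htr ↦ hP.trace_mul_eq_zero_of_range_le_iSup (fun j _ ↦ hpsd j) h htr
  refine ⟨?_, detects_nothing⟩
  rintro ⟨-, P, -, hP, -, hoff, hdiag⟩
  exact (hdiag i).ne' (detects_nothing (P i) (hP i) fun j hj ↦ hoff i j hj.symm)
end
end

section
/- Let 0 < p < 1 and 0 < q < 1, and define the bit-flip channel E_1(ρ) = pρ + (1−p)XρX and the phase-flip channel E_2(ρ) = qρ + (1−q)ZρZ on 2×2 matrices, where X = [[0,1],[1,0]] and Z = [[1,0],[0,−1]]. Then for every unit vector ψ ∈ ℂ², the output states E_1(|ψ⟩⟨ψ|) and E_2(|ψ⟩⟨ψ|) are not both pure, i.e., not both of rank 1. -/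
/-! For a pure state ρ = |ψ⟩⟨ψ| and an involution U, the 2×2 identity
det (sA + tB) = s² det A + t² det B + st (tr A tr B - tr AB) gives
det (sρ + (1 - s) UρU) = s (1 - s) (1 - ⟨ψ|U|ψ⟩²). So both outputs have rank 1 only if
⟨ψ|X|ψ⟩² = ⟨ψ|Z|ψ⟩² = 1; but ⟨ψ|Z|ψ⟩ = ±1 forces ψ to be a basis vector, where ⟨ψ|X|ψ⟩ = 0. -/

open Matrix

noncomputable section

/-- The Pauli X matrix. -/
def pauliX : Matrix (Fin 2) (Fin 2) ℂ := !![0, 1; 1, 0]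

/-- The Pauli Z matrix. -/
def pauliZ : Matrix (Fin 2) (Fin 2) ℂ := !![1, 0; 0, -1]

/-- The bit-flip channel E₁(ρ) = pρ + (1-p)XρX. -/
def bitFlip (p : ℝ) (ρ : Matrix (Fin 2) (Fin 2) ℂ) : Matrix (Fin 2) (Fin 2) ℂ :=
  (p : ℂ) • ρ + ((1 - p : ℝ) : ℂ) • (pauliX * ρ * pauliX)

/-- The phase-flip channel E₂(ρ) = qρ + (1-q)ZρZ. -/
def phaseFlip (q : ℝ) (ρ : Matrix (Fin 2) (Fin 2) ℂ) : Matrix (Fin 2) (Fin 2) ℂ :=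
  (q : ℂ) • ρ + ((1 - q : ℝ) : ℂ) • (pauliZ * ρ * pauliZ)

theorem Matrix.det_eq_zero_of_rank_lt_card {R m : Type*} [CommRing R] [IsDomain R] [Fintype m]
    [DecidableEq m] {A : Matrix m m R} (h : A.rank < Fintype.card m) : A.det = 0 := by
  by_contra hA
  exact h.ne (rank_of_det_ne_zero hA)

theorem Matrix.det_fin_two_smul_add_smul {R : Type*} [CommRing R]
    (A B : Matrix (Fin 2) (Fin 2) R) (s t : R) :
    det (s • A + t • B) =
      s ^ 2 * det A + t ^ 2 * det B + s * t * (trace A * trace B - trace (A * B)) := by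
  simp only [det_fin_two, trace_fin_two, mul_apply, Fin.sum_univ_two, add_apply, smul_apply,
    smul_eq_mul]
  ring

theorem det_smul_add_smul_conj_vecMulVec {R : Type*} [CommRing R]
    (U : Matrix (Fin 2) (Fin 2) R) (hU : U * U = 1) (ψ φ : Fin 2 → R) (h : φ ⬝ᵥ ψ = 1) (s : R) :
    det (s • vecMulVec ψ φ + (1 - s) • (U * vecMulVec ψ φ * U)) =
      s * (1 - s) * (1 - (φ ⬝ᵥ U *ᵥ ψ) ^ 2) := by
  have hconj : U * vecMulVec ψ φ * U = vecMulVec (U *ᵥ ψ) (φ ᵥ* U) := by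
    rw [mul_vecMulVec, vecMulVec_mul]
  have htr : trace (vecMulVec ψ φ) = 1 := by rw [trace_vecMulVec, dotProduct_comm, h]
  have htr_conj : trace (U * vecMulVec ψ φ * U) = 1 := by
    rw [trace_mul_cycle, hU, Matrix.one_mul, htr]
  have htr_mul : trace (vecMulVec ψ φ * (U * vecMulVec ψ φ * U)) = (φ ⬝ᵥ U *ᵥ ψ) ^ 2 := by
    rw [hconj, vecMulVec_mul_vecMulVec, trace_vecMulVec, dotProduct_smul, dotProduct_comm ψ,
      ← dotProduct_mulVec, smul_eq_mul, sq]
  rw [det_fin_two_smul_add_smul, htr, htr_conj, htr_mul, det_mul, det_mul, det_vecMulVec]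
  ring

theorem pauliX_mul_self : pauliX * pauliX = 1 := by
  simp [pauliX, one_fin_two]

theorem pauliZ_mul_self : pauliZ * pauliZ = 1 := by
  simp [pauliZ, one_fin_two]

theorem det_bitFlip_vecMulVec (p : ℝ) (ψ : Fin 2 → ℂ) (hψ : star ψ ⬝ᵥ ψ = 1) :
    det (bitFlip p (vecMulVec ψ (star ψ))) = p * (1 - p) * (1 - (star ψ ⬝ᵥ pauliX *ᵥ ψ) ^ 2) := by
  rw [bitFlip, Complex.ofReal_sub, Complex.ofReal_one,
    det_smul_add_smul_conj_vecMulVec _ pauliX_mul_self _ _ hψ]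

theorem det_phaseFlip_vecMulVec (q : ℝ) (ψ : Fin 2 → ℂ) (hψ : star ψ ⬝ᵥ ψ = 1) :
    det (phaseFlip q (vecMulVec ψ (star ψ))) = q * (1 - q) * (1 - (star ψ ⬝ᵥ pauliZ *ᵥ ψ) ^ 2) := by
  rw [phaseFlip, Complex.ofReal_sub, Complex.ofReal_one,
    det_smul_add_smul_conj_vecMulVec _ pauliZ_mul_self _ _ hψ]

theorem eq_one_of_mul_one_sub_mul_eq_zero {p : ℝ} (hp₀ : 0 < p) (hp₁ : p < 1) {w : ℂ}
    (h : (p : ℂ) * (1 - p) * (1 - w) = 0) : w = 1 := by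
  have hp : (p : ℂ) * (1 - p) ≠ 0 := by
    rw [← Complex.ofReal_one, ← Complex.ofReal_sub, ← Complex.ofReal_mul, Complex.ofReal_ne_zero]
    nlinarith
  exact (sub_eq_zero.mp ((mul_eq_zero.mp h).resolve_left hp)).symm

theorem pauliX_expectation_eq_zero_of_sq_pauliZ_expectation_eq_one (ψ : Fin 2 → ℂ)
    (hψ : star ψ ⬝ᵥ ψ = 1) (hZ : (star ψ ⬝ᵥ pauliZ *ᵥ ψ) ^ 2 = 1) :
    star ψ ⬝ᵥ pauliX *ᵥ ψ = 0 := by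
  simp only [dotProduct, Pi.star_apply, RCLike.star_def, Fin.sum_univ_two, pauliX, pauliZ,
    cons_mulVec, empty_mulVec, cons_val_zero, cons_val_one, cons_val_fin_one, one_mul, zero_mul,
    add_zero, zero_add, neg_mul, mul_neg, sq_eq_one_iff] at hψ hZ ⊢
  have hbasis : starRingEnd ℂ (ψ 0) * ψ 0 = 0 ∨ starRingEnd ℂ (ψ 1) * ψ 1 = 0 := by
    rcases hZ with h | h
    · exact .inr (by linear_combination (hψ - h) / 2)
    · exact .inl (by linear_combination (hψ + h) / 2)
  simp only [Complex.conj_mul', sq_eq_zero_iff, Complex.ofReal_eq_zero, norm_eq_zero] at hbasis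
  rcases hbasis with h | h <;> simp [h]

/-- for 0 < p,q < 1, the outputs of the bit-flip and phase-flip channels
on a pure input |ψ⟩⟨ψ| are never both pure (of rank 1). -/
theorem bitFlip_phaseFlip_not_both_pure (p q : ℝ)
    (hp₀ : 0 < p) (hp₁ : p < 1) (hq₀ : 0 < q) (hq₁ : q < 1)
    (ψ : Fin 2 → ℂ) (hψ : star ψ ⬝ᵥ ψ = 1) :
    ¬ ((bitFlip p (vecMulVec ψ (star ψ))).rank = 1 ∧
       (phaseFlip q (vecMulVec ψ (star ψ))).rank = 1) := by
  rintro ⟨hX, hZ⟩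
  have det_eq_zero {M : Matrix (Fin 2) (Fin 2) ℂ} (h : M.rank = 1) : M.det = 0 :=
    det_eq_zero_of_rank_lt_card (by simp [h])
  have hX₂ : (star ψ ⬝ᵥ pauliX *ᵥ ψ) ^ 2 = 1 := eq_one_of_mul_one_sub_mul_eq_zero hp₀ hp₁ <|
    (det_bitFlip_vecMulVec p ψ hψ).symm.trans (det_eq_zero hX)
  have hZ₂ : (star ψ ⬝ᵥ pauliZ *ᵥ ψ) ^ 2 = 1 := eq_one_of_mul_one_sub_mul_eq_zero hq₀ hq₁ <|
    (det_phaseFlip_vecMulVec q ψ hψ).symm.trans (det_eq_zero hZ)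
  rw [pauliX_expectation_eq_zero_of_sq_pauliZ_expectation_eq_one ψ hψ hZ₂] at hX₂
  norm_num at hX₂
end
end

section
/- Let ρ_1 and ρ_2 be density matrices on ℂ² that are unambiguously distinguishable. Then both ρ_1 and ρ_2 are pure, i.e., each has rank 1. -/
open Matrix Kronecker
open scoped ComplexOrder

noncomputable section

/-! The outcome Π₂ never fires on ρ₁, so tr(Π₂ ρ₁) = 0; for positive semidefinite matrices this
forces Π₂ ρ₁ = 0. Both factors are nonzero (tr(Π₂ ρ₂) > 0 and tr(Π₁ ρ₁) > 0), and on ℂ² the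
inequality rank Π₂ + rank ρ₁ ≤ 2 then leaves rank ρ₁ = 1; symmetrically for ρ₂. -/

-- Writing `A = Cᴴ C` and `B = Dᴴ D`, the trace is the squared Frobenius norm of `C Dᴴ`.
theorem Matrix.PosSemidef.trace_mul_eq_zero_iff {𝕜 n : Type*} [RCLike 𝕜] [Fintype n]
    [DecidableEq n] {A B : Matrix n n 𝕜} (hA : A.PosSemidef) (hB : B.PosSemidef) :
    (A * B).trace = 0 ↔ A * B = 0 := by
  open scoped MatrixOrder in
  obtain ⟨C, rfl⟩ := CStarAlgebra.nonneg_iff_eq_star_mul_self.mp hA.nonneg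
  open scoped MatrixOrder in
  obtain ⟨D, rfl⟩ := CStarAlgebra.nonneg_iff_eq_star_mul_self.mp hB.nonneg
  rw [star_eq_conjTranspose, star_eq_conjTranspose]
  have hprod : Cᴴ * C * (Dᴴ * D) = Cᴴ * (C * Dᴴ) * D := by simp only [Matrix.mul_assoc]
  have htrace : (Cᴴ * C * (Dᴴ * D)).trace = ((C * Dᴴ)ᴴ * (C * Dᴴ)).trace := by
    rw [hprod, trace_mul_comm, conjTranspose_mul, conjTranspose_conjTranspose]
    simp only [Matrix.mul_assoc]
  refine ⟨fun h => ?_, fun h => by rw [h, trace_zero]⟩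
  rw [htrace, trace_conjTranspose_mul_self_eq_zero_iff] at h
  rw [hprod, h, Matrix.mul_zero, Matrix.zero_mul]

theorem Matrix.rank_eq_zero_iff {K m n : Type*} [Field K] [Fintype m] [Fintype n]
    {A : Matrix m n K} : A.rank = 0 ↔ A = 0 := by
  rw [rank_eq_finrank_span_cols, Submodule.finrank_eq_zero, Submodule.span_eq_bot,
    Set.forall_mem_range, ← transpose_eq_zero]
  exact funext_iff.symm

theorem Matrix.rank_eq_one_of_mul_eq_zero {K : Type*} [Field K] {A B : Matrix (Fin 2) (Fin 2) K}
    (hA : A ≠ 0) (hB : B ≠ 0) (hAB : A * B = 0) : B.rank = 1 := by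
  have hsum := rank_add_rank_le_card_of_mul_eq_zero hAB
  rw [Fintype.card_fin] at hsum
  have := mt rank_eq_zero_iff.mp hA
  have := mt rank_eq_zero_iff.mp hB
  omega

namespace UnambiguouslyDistinguishable

variable {μ : Type*} [Fintype μ] [DecidableEq μ] {n : ℕ} {σ : Fin n → Matrix μ μ ℂ}

theorem ne_zero (h : UnambiguouslyDistinguishable σ) (i : Fin n) : σ i ≠ 0 := by
  obtain ⟨-, P, -, -, -, -, hpos⟩ := h
  rintro hi
  simpa [hi] using hpos i

theorem exists_mul_eq_zero (hσ : ∀ i, (σ i).PosSemidef) (h : UnambiguouslyDistinguishable σ) :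
    ∃ P : Fin n → Matrix μ μ ℂ, (∀ i, P i ≠ 0) ∧ ∀ i j, i ≠ j → P i * σ j = 0 := by
  obtain ⟨-, P, -, hP, -, hoff, hpos⟩ := h
  refine ⟨P, fun i hi => by simpa [hi] using hpos i, fun i j hij => ?_⟩
  exact ((hP i).trace_mul_eq_zero_iff (hσ j)).mp (hoff i j hij)

end UnambiguouslyDistinguishable

theorem unambig_qubit_states_pure_general (ρ₁ ρ₂ : Matrix (Fin 2) (Fin 2) ℂ)
    (h₁ : ρ₁.PosSemidef) (h₂ : ρ₂.PosSemidef)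
    (h : UnambiguouslyDistinguishable ![ρ₁, ρ₂]) :
    ρ₁.rank = 1 ∧ ρ₂.rank = 1 := by
  have hσ : ∀ i, (![ρ₁, ρ₂] i).PosSemidef := Fin.forall_fin_two.mpr ⟨h₁, h₂⟩
  obtain ⟨P, hP, hann⟩ := h.exists_mul_eq_zero hσ
  exact ⟨rank_eq_one_of_mul_eq_zero (hP 1) (h.ne_zero 0) (hann 1 0 (by decide)),
    rank_eq_one_of_mul_eq_zero (hP 0) (h.ne_zero 1) (hann 0 1 (by decide))⟩

/-- if two qubit density matrices are unambiguously distinguishable, then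
both are pure, i.e. of rank 1. -/
theorem unambig_qubit_states_pure (ρ₁ ρ₂ : Matrix (Fin 2) (Fin 2) ℂ)
    (h₁ : ρ₁.PosSemidef) (h₂ : ρ₂.PosSemidef)
    (t₁ : ρ₁.trace = 1) (t₂ : ρ₂.trace = 1)
    (h : UnambiguouslyDistinguishable ![ρ₁, ρ₂]) :
    ρ₁.rank = 1 ∧ ρ₂.rank = 1 :=
  unambig_qubit_states_pure_general ρ₁ ρ₂ h₁ h₂ h
end
end

section
/- Let 0 < p < 1 and 0 < q < 1, and define the bit-flip channel E_1(ρ) = pρ + (1−p)XρX and the phase-flip channel E_2(ρ) = qρ + (1−q)ZρZ on 2×2 matrices. Then E_1 and E_2 cannot be unambiguously discriminated without an ancilla: for every unit vector ψ ∈ ℂ², the output states E_1(|ψ⟩⟨ψ|) and E_2(|ψ⟩⟨ψ|) are not unambiguously distinguishable. -/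
open Matrix Kronecker
open scoped ComplexOrder

noncomputable section

/-!
An unambiguous measurement has to annihilate both pure components `ψ` and `Zψ` (resp. `ψ` and
`Xψ`) of the state it must never report, while not annihilating `Xψ` (resp. `Zψ`). If `ψ` is a
basis vector, then `Zψ = ±ψ`, so the second element of the POVM cannot detect `E₂(|ψ⟩⟨ψ|)`;
otherwise `ψ` and `Zψ` span `ℂ²`, so the first element vanishes and cannot detect `E₁(|ψ⟩⟨ψ|)`.
-/

section PureStates

variable {n : Type*} [Fintype n]

lemma Matrix.trace_mul_vecMulVec_star (A : Matrix n n ℂ) (x : n → ℂ) :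
    (A * vecMulVec x (star x)).trace = star x ⬝ᵥ A *ᵥ x := by
  rw [mul_vecMulVec, trace_vecMulVec, dotProduct_comm]

lemma Matrix.mul_vecMulVec_star_mul_conjTranspose_s16 (M : Matrix n n ℂ) (x : n → ℂ) :
    M * vecMulVec x (star x) * Mᴴ = vecMulVec (M *ᵥ x) (star (M *ᵥ x)) := by
  rw [mul_vecMulVec, vecMulVec_mul, star_mulVec]

lemma Matrix.PosSemidef.trace_mul_add_vecMulVec_star_eq_zero_iff {P : Matrix n n ℂ}
    (hP : P.PosSemidef) {c d : ℂ} (hc : 0 < c) (hd : 0 < d) (u v : n → ℂ) :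
    (P * (c • vecMulVec u (star u) + d • vecMulVec v (star v))).trace = 0 ↔
      P *ᵥ u = 0 ∧ P *ᵥ v = 0 := by
  rw [mul_add, Matrix.mul_smul, Matrix.mul_smul, trace_add, trace_smul, trace_smul,
    trace_mul_vecMulVec_star, trace_mul_vecMulVec_star, smul_eq_mul, smul_eq_mul,
    add_eq_zero_iff_of_nonneg (mul_nonneg hc.le (hP.dotProduct_mulVec_nonneg u))
      (mul_nonneg hd.le (hP.dotProduct_mulVec_nonneg v)),
    mul_eq_zero, mul_eq_zero, or_iff_right hc.ne', or_iff_right hd.ne',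
    hP.dotProduct_mulVec_zero_iff, hP.dotProduct_mulVec_zero_iff]

end PureStates

lemma pauliX_conjTranspose : pauliXᴴ = pauliX := by
  ext i j; fin_cases i <;> fin_cases j <;> simp [pauliX]

lemma pauliZ_conjTranspose : pauliZᴴ = pauliZ := by
  ext i j; fin_cases i <;> fin_cases j <;> simp [pauliZ]

lemma pauliZ_mulVec (ψ : Fin 2 → ℂ) : pauliZ *ᵥ ψ = ![ψ 0, -ψ 1] := by
  ext i; fin_cases i <;> simp [pauliZ, mulVec, dotProduct]

lemma bitFlip_vecMulVec_star (p : ℝ) (ψ : Fin 2 → ℂ) :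
    bitFlip p (vecMulVec ψ (star ψ)) = (p : ℂ) • vecMulVec ψ (star ψ) +
      ((1 - p : ℝ) : ℂ) • vecMulVec (pauliX *ᵥ ψ) (star (pauliX *ᵥ ψ)) := by
  rw [bitFlip, ← mul_vecMulVec_star_mul_conjTranspose_s16, pauliX_conjTranspose]

lemma phaseFlip_vecMulVec_star (q : ℝ) (ψ : Fin 2 → ℂ) :
    phaseFlip q (vecMulVec ψ (star ψ)) = (q : ℂ) • vecMulVec ψ (star ψ) +
      ((1 - q : ℝ) : ℂ) • vecMulVec (pauliZ *ᵥ ψ) (star (pauliZ *ᵥ ψ)) := by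
  rw [phaseFlip, ← mul_vecMulVec_star_mul_conjTranspose_s16, pauliZ_conjTranspose]

lemma mulVec_pauliZ_mulVec_eq_zero {A : Matrix (Fin 2) (Fin 2) ℂ} {ψ : Fin 2 → ℂ}
    (hψ : ψ 0 = 0 ∨ ψ 1 = 0) (hA : A *ᵥ ψ = 0) : A *ᵥ (pauliZ *ᵥ ψ) = 0 := by
  have hZψ : pauliZ *ᵥ ψ = -ψ ∨ pauliZ *ᵥ ψ = ψ := by
    rw [pauliZ_mulVec]
    rcases hψ with h | h
    · left; ext i; fin_cases i <;> simp [h]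
    · right; ext i; fin_cases i <;> simp [h]
  rcases hZψ with h | h <;> rw [h] <;> simp [mulVec_neg, hA]

lemma eq_zero_of_mulVec_eq_zero_of_mulVec_pauliZ_mulVec_eq_zero
    {A : Matrix (Fin 2) (Fin 2) ℂ} {ψ : Fin 2 → ℂ} (h₀ : ψ 0 ≠ 0) (h₁ : ψ 1 ≠ 0)
    (hA : A *ᵥ ψ = 0) (hAZ : A *ᵥ (pauliZ *ᵥ ψ) = 0) : A = 0 := by
  rw [pauliZ_mulVec] at hAZ
  ext i j
  have e := congrFun hA i
  have eZ := congrFun hAZ i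
  simp only [mulVec, dotProduct, Fin.sum_univ_two, Pi.zero_apply, cons_val_zero,
    cons_val_one] at e eZ
  fin_cases j
  · have : A i 0 * ψ 0 = 0 := by linear_combination (e + eZ) / 2
    simpa using (mul_eq_zero.mp this).resolve_right h₀
  · have : A i 1 * ψ 1 = 0 := by linear_combination (e - eZ) / 2
    simpa using (mul_eq_zero.mp this).resolve_right h₁

theorem bitFlip_phaseFlip_not_unambig_no_ancilla_general (p q : ℝ)
    (hp₀ : 0 < p) (hp₁ : p < 1) (hq₀ : 0 < q) (hq₁ : q < 1)
    (ψ : Fin 2 → ℂ) :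
    ¬ UnambiguouslyDistinguishable
        ![bitFlip p (vecMulVec ψ (star ψ)), phaseFlip q (vecMulVec ψ (star ψ))] := by
  rintro ⟨-, P, -, hP, -, hoff, hdiag⟩
  have hp : 0 < (p : ℂ) ∧ 0 < ((1 - p : ℝ) : ℂ) := by
    simp only [Complex.zero_lt_real]; constructor <;> linarith
  have hq : 0 < (q : ℂ) ∧ 0 < ((1 - q : ℝ) : ℂ) := by
    simp only [Complex.zero_lt_real]; constructor <;> linarith
  have h₀₁ := hoff 0 1 (by decide)
  have h₁₀ := hoff 1 0 (by decide)
  have h₀₀ := hdiag 0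
  have h₁₁ := hdiag 1
  simp only [cons_val_zero, cons_val_one, bitFlip_vecMulVec_star,
    phaseFlip_vecMulVec_star] at h₀₁ h₁₀ h₀₀ h₁₁
  obtain ⟨hP₀ψ, hP₀Zψ⟩ :=
    ((hP 0).trace_mul_add_vecMulVec_star_eq_zero_iff hq.1 hq.2 _ _).1 h₀₁
  obtain ⟨hP₁ψ, -⟩ :=
    ((hP 1).trace_mul_add_vecMulVec_star_eq_zero_iff hp.1 hp.2 _ _).1 h₁₀
  by_cases hψ : ψ 0 = 0 ∨ ψ 1 = 0
  · exact h₁₁.ne' (((hP 1).trace_mul_add_vecMulVec_star_eq_zero_iff hq.1 hq.2 _ _).2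
      ⟨hP₁ψ, mulVec_pauliZ_mulVec_eq_zero hψ hP₁ψ⟩)
  · push Not at hψ
    have hP₀ := eq_zero_of_mulVec_eq_zero_of_mulVec_pauliZ_mulVec_eq_zero hψ.1 hψ.2 hP₀ψ hP₀Zψ
    exact h₀₀.ne' (((hP 0).trace_mul_add_vecMulVec_star_eq_zero_iff hp.1 hp.2 _ _).2
      (by simp [hP₀]))

/-- for 0 < p,q < 1, the bit-flip and phase-flip channels cannot be
unambiguously discriminated without an ancilla: for every unit vector ψ ∈ ℂ², the two
output states are not unambiguously distinguishable. -/
theorem bitFlip_phaseFlip_not_unambig_no_ancilla (p q : ℝ)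
    (hp₀ : 0 < p) (hp₁ : p < 1) (hq₀ : 0 < q) (hq₁ : q < 1)
    (ψ : Fin 2 → ℂ) (hψ : star ψ ⬝ᵥ ψ = 1) :
    ¬ UnambiguouslyDistinguishable
        ![bitFlip p (vecMulVec ψ (star ψ)), phaseFlip q (vecMulVec ψ (star ψ))] :=
  bitFlip_phaseFlip_not_unambig_no_ancilla_general p q hp₀ hp₁ hq₀ hq₁ ψ
end
end
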